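/- arXiv:2411.09305 — 11 statements merged into one kernel-verified Lean document; each statement's English description precedes it below -/
import Mathlib

section
/- (Douglas' majorization and factorization theorem) Let H1, H2, H3 be real Hilbert spaces and let A : H1 → H3 and B : H2 → H3 be continuous linear maps. The following are equivalent: (i) range(A) ⊆ range(B); (ii) there exists a constant C > 0 such that ‖A* z‖ ≤ C ‖B* z‖ for all z ∈ H3, where A*, B* denote the Hilbert adjoints; (iii) there exists a continuous linear map C₀ : H1 → H2 such that A = B ∘ C₀. -/
open ContinuousLinearMap
open scoped InnerProductSpace

/-!
(i) ⇒ (iii): `B` restricted to `(ker B)ᗮ` is injective with the same range as `B`, so `A` factors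
through it by a linear map whose graph `{(x, y) | B y = A x}` is closed; the closed graph theorem
makes the factor continuous. (iii) ⇒ (ii): `A* = C₀* B*`. (ii) ⇒ (i): for fixed `x`, the functional
`B* z ↦ ⟪x, A* z⟫` on `range B*` is well defined and bounded by `C ‖x‖`; by Hahn–Banach and Riesz it
is `⟪y, ·⟫` for some `y`, and then `⟪B y, z⟫ = ⟪A x, z⟫` for all `z`.
-/

theorem LinearMap.exists_strongDual_comp_eq_of_norm_le {𝕜 E F : Type*} [RCLike 𝕜]
    [AddCommGroup E] [Module 𝕜 E] [NormedAddCommGroup F] [NormedSpace 𝕜 F]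
    (T : E →ₗ[𝕜] F) (g : E →ₗ[𝕜] 𝕜) (c : ℝ) (hg : ∀ z, ‖g z‖ ≤ c * ‖T z‖) :
    ∃ φ : StrongDual 𝕜 F, ∀ z, φ (T z) = g z := by
  have hker : LinearMap.ker T ≤ LinearMap.ker g := fun z hz => by
    simpa [show T z = 0 from hz] using hg z
  let L : LinearMap.range T →ₗ[𝕜] 𝕜 :=
    (LinearMap.ker T).liftQ g hker ∘ₗ T.quotKerEquivRange.symm.toLinearMap
  have hL : ∀ z, L ⟨T z, LinearMap.mem_range_self T z⟩ = g z := fun z => by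
    simp [L, LinearMap.quotKerEquivRange_symm_apply_image]
  have hbound : ∀ u, ‖L u‖ ≤ c * ‖u‖ := by
    rintro ⟨_, z, rfl⟩
    exact (hL z).symm ▸ hg z
  obtain ⟨φ, hφ, -⟩ := exists_extension_norm_eq _ (L.mkContinuous c hbound)
  exact ⟨φ, fun z => (hφ _).trans (hL z)⟩

namespace ContinuousLinearMap

variable {𝕜 E F G : Type*}

section Banach

variable [NontriviallyNormedField 𝕜]
  [NormedAddCommGroup E] [NormedSpace 𝕜 E] [CompleteSpace E]
  [NormedAddCommGroup F] [NormedSpace 𝕜 F]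
  [NormedAddCommGroup G] [NormedSpace 𝕜 G] [CompleteSpace G]

theorem exists_comp_eq_of_injective_of_range_subset (A : E →L[𝕜] F) (B : G →L[𝕜] F)
    (hB : Function.Injective B) (hAB : Set.range A ⊆ Set.range B) :
    ∃ C₀ : E →L[𝕜] G, B ∘L C₀ = A := by
  let f : E →ₗ[𝕜] G := (LinearEquiv.ofInjective (B : G →ₗ[𝕜] F) hB).symm ∘ₗ
    (A : E →ₗ[𝕜] F).codRestrict (LinearMap.range (B : G →ₗ[𝕜] F)) fun x => hAB ⟨x, rfl⟩
  have hf : ∀ x, B (f x) = A x := fun x =>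
    LinearEquiv.ofInjective_symm_apply (h := hB) (f := (B : G →ₗ[𝕜] F)) _
  have hgraph : (f.graph : Set (E × G)) = {p | B p.2 = A p.1} := by
    ext ⟨x, y⟩
    simp only [SetLike.mem_coe, LinearMap.mem_graph_iff, Set.mem_ofPred_eq]
    exact ⟨fun h => h ▸ hf x, fun h => hB (h.trans (hf x).symm)⟩
  have hclosed : IsClosed (f.graph : Set (E × G)) :=
    hgraph ▸ isClosed_eq (by fun_prop) (by fun_prop)
  exact ⟨ofIsClosedGraph hclosed, ext hf⟩

end Banach

section Hilbert

variable [RCLike 𝕜]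
  [NormedAddCommGroup E] [InnerProductSpace 𝕜 E]
  [NormedAddCommGroup F] [InnerProductSpace 𝕜 F]
  [NormedAddCommGroup G] [InnerProductSpace 𝕜 G]

theorem range_subset_range_of_norm_adjoint_apply_le
    [CompleteSpace E] [CompleteSpace F] [CompleteSpace G] (A : E →L[𝕜] F) (B : G →L[𝕜] F) (C : ℝ)
    (h : ∀ z, ‖adjoint A z‖ ≤ C * ‖adjoint B z‖) : Set.range A ⊆ Set.range B := by
  rintro _ ⟨x, rfl⟩
  obtain ⟨φ, hφ⟩ := LinearMap.exists_strongDual_comp_eq_of_norm_le (adjoint B : F →ₗ[𝕜] G)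
    ((innerSL 𝕜 x ∘L adjoint A) : F →ₗ[𝕜] 𝕜) (C * ‖x‖) fun z => by
      calc ‖⟪x, adjoint A z⟫_𝕜‖ ≤ ‖x‖ * ‖adjoint A z‖ := norm_inner_le_norm _ _
        _ ≤ ‖x‖ * (C * ‖adjoint B z‖) := by gcongr; exact h z
        _ = C * ‖x‖ * ‖adjoint B z‖ := by ring
  refine ⟨(InnerProductSpace.toDual 𝕜 G).symm φ, ext_inner_right 𝕜 fun z => ?_⟩
  calc ⟪B ((InnerProductSpace.toDual 𝕜 G).symm φ), z⟫_𝕜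
      = ⟪(InnerProductSpace.toDual 𝕜 G).symm φ, adjoint B z⟫_𝕜 := (adjoint_inner_right B _ _).symm
    _ = ⟪x, adjoint A z⟫_𝕜 := by rw [InnerProductSpace.toDual_symm_apply]; exact hφ z
    _ = ⟪A x, z⟫_𝕜 := adjoint_inner_right A x z

theorem injective_comp_subtypeL_orthogonal_ker (B : G →L[𝕜] F) :
    Function.Injective (B ∘L B.kerᗮ.subtypeL) := by
  refine (injective_iff_map_eq_zero _).2 fun y hy => Subtype.ext ?_
  exact Submodule.disjoint_def.1 B.ker.orthogonal_disjoint y hy y.2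

theorem range_comp_subtypeL_orthogonal_ker [CompleteSpace G] (B : G →L[𝕜] F) :
    Set.range (B ∘L B.kerᗮ.subtypeL) = Set.range B := by
  refine (Set.range_comp_subset_range B.kerᗮ.subtypeL B).antisymm ?_
  rintro _ ⟨x, rfl⟩
  have : CompleteSpace B.ker := B.isClosed_ker.completeSpace_coe
  refine ⟨⟨x - B.ker.starProjection x, B.ker.sub_starProjection_mem_orthogonal x⟩, ?_⟩
  simp [show B (B.ker.starProjection x) = 0 from B.ker.starProjection_apply_mem x]

theorem exists_comp_eq_of_range_subset [CompleteSpace E] [CompleteSpace G]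
    (A : E →L[𝕜] F) (B : G →L[𝕜] F) (hAB : Set.range A ⊆ Set.range B) : ∃ C₀ : E →L[𝕜] G, B ∘L C₀ = A := by
  have : CompleteSpace B.kerᗮ := B.ker.isClosed_orthogonal.completeSpace_coe
  obtain ⟨C₀, hC₀⟩ := exists_comp_eq_of_injective_of_range_subset A _
    (injective_comp_subtypeL_orthogonal_ker B)
    (hAB.trans (range_comp_subtypeL_orthogonal_ker B).ge)
  exact ⟨B.kerᗮ.subtypeL ∘L C₀, hC₀⟩

theorem norm_adjoint_apply_le_of_comp_eq [CompleteSpace E] [CompleteSpace F] [CompleteSpace G]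
    {A : E →L[𝕜] F} {B : G →L[𝕜] F} {C₀ : E →L[𝕜] G}
    (hA : B ∘L C₀ = A) (z : F) : ‖adjoint A z‖ ≤ ‖C₀‖ * ‖adjoint B z‖ := by
  rw [← hA, adjoint_comp, ← LinearIsometryEquiv.norm_map (adjoint (𝕜 := 𝕜)) C₀]
  exact (adjoint C₀).le_opNorm _

end Hilbert

end ContinuousLinearMap

/-- Douglas' majorization and factorization theorem. -/
theorem douglas_majorization_factorization
    {H1 H2 H3 : Type*}
    [NormedAddCommGroup H1] [InnerProductSpace ℝ H1] [CompleteSpace H1]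
    [NormedAddCommGroup H2] [InnerProductSpace ℝ H2] [CompleteSpace H2]
    [NormedAddCommGroup H3] [InnerProductSpace ℝ H3] [CompleteSpace H3]
    (A : H1 →L[ℝ] H3) (B : H2 →L[ℝ] H3) :
    [ Set.range A ⊆ Set.range B,
      ∃ C : ℝ, 0 < C ∧ ∀ z : H3, ‖adjoint A z‖ ≤ C * ‖adjoint B z‖,
      ∃ C₀ : H1 →L[ℝ] H2, ∀ h1 : H1, A h1 = B (C₀ h1) ].TFAE := by
  tfae_have 1 → 3 := fun hAB =>
    (exists_comp_eq_of_range_subset A B hAB).imp fun C₀ hC₀ x => (DFunLike.congr_fun hC₀ x).symm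
  tfae_have 3 → 2 := fun ⟨C₀, hC₀⟩ =>
    have hA : B ∘L C₀ = A := ext fun x => (hC₀ x).symm
    ⟨‖C₀‖ + 1, by positivity, fun z =>
      (norm_adjoint_apply_le_of_comp_eq hA z).trans (by gcongr; linarith)⟩
  tfae_have 2 → 1 := fun ⟨C, _, h⟩ => range_subset_range_of_norm_adjoint_apply_le A B C h
  tfae_finish
end

section
/- Let H1, H2, H3 be real Hilbert spaces and let A : H1 → H3, B : H2 → H3 be continuous linear maps. If there exists a linear map C₁ : H1 → H2 (not necessarily continuous) with A = B ∘ C₁, then there exists a continuous linear map C₂ : H1 → H2 with A = B ∘ C₂. -/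
/-!
Since `ker B` is closed in a Hilbert space, it has a topological complement `L`, and projecting
`C₁` onto `L` along `ker B` does not change `B ∘ C₁ = A`. On `L` the operator `B` is injective,
so the graph of the projected map is `{(x, y) | A x = B y}`, which is closed; the closed graph
theorem makes it continuous.
-/

open Function

theorem LinearMap.continuous_of_continuous_comp_of_injective
    {𝕜 E F G : Type*} [NontriviallyNormedField 𝕜]
    [NormedAddCommGroup E] [NormedSpace 𝕜 E] [CompleteSpace E]
    [NormedAddCommGroup F] [NormedSpace 𝕜 F] [CompleteSpace F]
    [TopologicalSpace G] [T2Space G]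
    (C : E →ₗ[𝕜] F) {B : F → G} (hB : Continuous B) (hB_inj : Injective B)
    (hBC : Continuous (B ∘ C)) : Continuous C := by
  refine C.continuous_of_isClosed_graph ?_
  have hgraph : (C.graph : Set (E × F)) = {p | B (C p.1) = B p.2} := by
    ext p
    simp [LinearMap.mem_graph_iff, hB_inj.eq_iff, eq_comm]
  rw [hgraph]
  exact isClosed_eq (hBC.comp continuous_fst) (hB.comp continuous_snd)

namespace ContinuousLinearMap

section IsTopComplKer

variable {R F G : Type*} [Ring R] [AddCommGroup F] [Module R F] [TopologicalSpace F]
  [AddCommGroup G] [Module R G] [TopologicalSpace G]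

theorem apply_projectionL_eq_of_isTopCompl_ker [ContinuousSub F] (B : F →L[R] G)
    {L : Submodule R F} (hL : Submodule.IsTopCompl B.ker L) (y : F) :
    B (L.projectionL B.ker hL.symm y) = B y := by
  have hker : y - L.projectionL B.ker hL.symm y ∈ B.ker := by
    rw [← Submodule.projectionL_eq_self_sub_projectionL hL.symm]
    exact Submodule.projectionL_apply_mem hL y
  rwa [LinearMap.mem_ker, map_sub, sub_eq_zero, eq_comm] at hker

theorem injective_comp_subtypeL_of_isTopCompl_ker (B : F →L[R] G) {L : Submodule R F}
    (hL : Submodule.IsTopCompl B.ker L) : Injective (B ∘L L.subtypeL) := by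
  refine (injective_iff_map_eq_zero _).2 fun y hy => ?_
  have hy_mem : (y : F) ∈ B.ker ⊓ L := ⟨hy, y.2⟩
  rw [hL.isCompl.inf_eq_bot, Submodule.mem_bot] at hy_mem
  exact Subtype.ext hy_mem

end IsTopComplKer

theorem exists_comp_eq_of_closedComplemented_ker
    {𝕜 E F G : Type*} [NontriviallyNormedField 𝕜]
    [NormedAddCommGroup E] [NormedSpace 𝕜 E] [CompleteSpace E]
    [NormedAddCommGroup F] [NormedSpace 𝕜 F] [CompleteSpace F]
    [AddCommGroup G] [Module 𝕜 G] [TopologicalSpace G] [T2Space G]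
    (A : E →L[𝕜] G) (B : F →L[𝕜] G) (hB : B.ker.ClosedComplemented)
    (C : E →ₗ[𝕜] F) (hC : ∀ x, A x = B (C x)) :
    ∃ C' : E →L[𝕜] F, ∀ x, A x = B (C' x) := by
  obtain ⟨L, hL⟩ := hB.exists_isTopCompl
  have : CompleteSpace L := hL.isClosed'.completeSpace_coe
  set P := L.projectionOntoL B.ker hL.symm
  have hBP : ∀ x, B (P (C x)) = A x := fun x =>
    (B.apply_projectionL_eq_of_isTopCompl_ker hL (C x)).trans (hC x).symm
  have hP : Continuous (P.toLinearMap ∘ₗ C) := by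
    refine LinearMap.continuous_of_continuous_comp_of_injective _ (B ∘L L.subtypeL).continuous
      (B.injective_comp_subtypeL_of_isTopCompl_ker hL) ?_
    convert A.continuous using 1
    ext x
    exact hBP x
  exact ⟨L.subtypeL ∘L ⟨_, hP⟩, fun x => (hBP x).symm⟩

end ContinuousLinearMap

theorem factorization_upgrade_to_continuous_general
    {H1 H2 H3 : Type*}
    [NormedAddCommGroup H1] [InnerProductSpace ℝ H1] [CompleteSpace H1]
    [NormedAddCommGroup H2] [InnerProductSpace ℝ H2] [CompleteSpace H2]
    [NormedAddCommGroup H3] [InnerProductSpace ℝ H3]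
    (A : H1 →L[ℝ] H3) (B : H2 →L[ℝ] H3)
    (C₁ : H1 →ₗ[ℝ] H2) (hC₁ : ∀ h1 : H1, A h1 = B (C₁ h1)) :
    ∃ C₂ : H1 →L[ℝ] H2, ∀ h1 : H1, A h1 = B (C₂ h1) := by
  have : CompleteSpace B.ker := B.isClosed_ker.completeSpace_coe
  exact A.exists_comp_eq_of_closedComplemented_ker B
    B.ker.isTopCompl_orthogonal.closedComplemented C₁ hC₁

/-- If `A = B ∘ C₁` for a (not necessarily continuous) linear map `C₁`, then
`A = B ∘ C₂` for some continuous linear map `C₂`. -/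
theorem factorization_upgrade_to_continuous
    {H1 H2 H3 : Type*}
    [NormedAddCommGroup H1] [InnerProductSpace ℝ H1] [CompleteSpace H1]
    [NormedAddCommGroup H2] [InnerProductSpace ℝ H2] [CompleteSpace H2]
    [NormedAddCommGroup H3] [InnerProductSpace ℝ H3] [CompleteSpace H3]
    (A : H1 →L[ℝ] H3) (B : H2 →L[ℝ] H3)
    (C₁ : H1 →ₗ[ℝ] H2) (hC₁ : ∀ h1 : H1, A h1 = B (C₁ h1)) :
    ∃ C₂ : H1 →L[ℝ] H2, ∀ h1 : H1, A h1 = B (C₂ h1) :=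
  factorization_upgrade_to_continuous_general A B C₁ hC₁
end

section
/- (Necessary conditions) Suppose that for every h1 ∈ H1 and every ε > 0 there exists h2 ∈ H2 such that A1 h1 = B1 h2 and ‖A2 h1 − B2 h2‖ ≤ ε. Then: (a) there exists C > 0 such that ‖A1* h4‖ ≤ C ‖B1* h4‖ for all h4 ∈ H4; and (b) for all h4 ∈ H4 and h5 ∈ H5, if B1* h4 + B2* h5 = 0 then A1* h4 + A2* h5 = 0. -/
/-!
(a) The projection of the closed subspace `{(x, y) | A₁ x = B₁ y}` of `H₁ × H₂` onto `H₁` is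
onto, so by the open mapping theorem every `x` has such a `y` with `‖y‖ ≤ C ‖x‖`. Taking
`x = A₁* z` gives `‖x‖² = ⟪z, A₁ x⟫ = ⟪z, B₁ y⟫ = ⟪B₁* z, y⟫ ≤ C ‖B₁* z‖ ‖x‖`.

(b) For `v = A₁* h₄ + A₂* h₅` and any `y` with `A₁ v = B₁ y`,
`‖v‖² = ⟪B₁* h₄ + B₂* h₅, y⟫ + ⟪h₅, A₂ v - B₂ y⟫`; the first term vanishes and the second can
be made arbitrarily small.
-/

open ContinuousLinearMap

open scoped InnerProductSpace

theorem ContinuousLinearMap.exists_preimage_norm_le_of_range_le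
    {𝕜 E F G : Type*} [NontriviallyNormedField 𝕜]
    [NormedAddCommGroup E] [NormedSpace 𝕜 E] [CompleteSpace E]
    [NormedAddCommGroup F] [NormedSpace 𝕜 F]
    [NormedAddCommGroup G] [NormedSpace 𝕜 G] [CompleteSpace G]
    (A : E →L[𝕜] F) (B : G →L[𝕜] F) (h : Set.range A ⊆ Set.range B) :
    ∃ C > 0, ∀ x, ∃ y, A x = B y ∧ ‖y‖ ≤ C * ‖x‖ := by
  let S : Submodule 𝕜 (E × G) := (A.comp (fst 𝕜 E G) - B.comp (snd 𝕜 E G)).ker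
  have : CompleteSpace S := (isClosed_ker _).completeSpace_coe
  have hS : ∀ p : E × G, p ∈ S ↔ A p.1 = B p.2 := fun p => by
    simp [S, sub_eq_zero]
  have hsurj : Function.Surjective ((fst 𝕜 E G).comp S.subtypeL) := fun x => by
    obtain ⟨y, hy⟩ := h (Set.mem_range_self x)
    exact ⟨⟨(x, y), (hS _).2 hy.symm⟩, rfl⟩
  obtain ⟨C, hC, hpre⟩ := exists_preimage_norm_le _ hsurj
  refine ⟨C, hC, fun x => ?_⟩
  obtain ⟨⟨p, hp⟩, rfl, hle⟩ := hpre x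
  exact ⟨p.2, (hS p).1 hp, (_root_.norm_snd_le p).trans hle⟩

section InnerProduct

variable {𝕜 E F G : Type*} [RCLike 𝕜]
  [NormedAddCommGroup E] [InnerProductSpace 𝕜 E] [CompleteSpace E]
  [NormedAddCommGroup F] [InnerProductSpace 𝕜 F] [CompleteSpace F]
  [NormedAddCommGroup G] [InnerProductSpace 𝕜 G] [CompleteSpace G]

theorem ContinuousLinearMap.exists_norm_adjoint_le_of_range_le
    (A : E →L[𝕜] F) (B : G →L[𝕜] F) (h : Set.range A ⊆ Set.range B) :
    ∃ C > 0, ∀ z, ‖adjoint A z‖ ≤ C * ‖adjoint B z‖ := by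
  obtain ⟨C, hC, hpre⟩ := A.exists_preimage_norm_le_of_range_le B h
  refine ⟨C, hC, fun z => ?_⟩
  set x := adjoint A z
  obtain ⟨y, hy, hyx⟩ := hpre x
  have key : ‖x‖ ^ 2 ≤ ‖adjoint B z‖ * (C * ‖x‖) :=
    calc ‖x‖ ^ 2 = ‖⟪adjoint B z, y⟫_𝕜‖ := by
          rw [adjoint_inner_left, ← hy, ← adjoint_inner_left, inner_self_eq_norm_sq_to_K]
          simp [x]
      _ ≤ ‖adjoint B z‖ * ‖y‖ := norm_inner_le_norm _ _
      _ ≤ ‖adjoint B z‖ * (C * ‖x‖) := by gcongr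
  rcases (norm_nonneg x).eq_or_lt with hx | hx
  · rw [← hx]; positivity
  · nlinarith

theorem ContinuousLinearMap.inner_adjoint_add_adjoint_eq {H : Type*}
    [NormedAddCommGroup H] [InnerProductSpace 𝕜 H] [CompleteSpace H]
    (A₁ : E →L[𝕜] F) (A₂ : E →L[𝕜] H) (B₁ : G →L[𝕜] F) (B₂ : G →L[𝕜] H)
    {x : E} {y : G} (hxy : A₁ x = B₁ y) (u : F) (w : H) :
    ⟪adjoint A₁ u + adjoint A₂ w, x⟫_𝕜 =
      ⟪adjoint B₁ u + adjoint B₂ w, y⟫_𝕜 + ⟪w, A₂ x - B₂ y⟫_𝕜 := by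
  simp only [inner_add_left, adjoint_inner_left, inner_sub_right, hxy]
  ring

theorem ContinuousLinearMap.adjoint_add_adjoint_eq_zero_of_approx {H : Type*}
    [NormedAddCommGroup H] [InnerProductSpace 𝕜 H] [CompleteSpace H]
    (A₁ : E →L[𝕜] F) (A₂ : E →L[𝕜] H) (B₁ : G →L[𝕜] F) (B₂ : G →L[𝕜] H)
    (happrox : ∀ x : E, ∀ ε : ℝ, 0 < ε → ∃ y : G, A₁ x = B₁ y ∧ ‖A₂ x - B₂ y‖ ≤ ε)
    {u : F} {w : H} (hB : adjoint B₁ u + adjoint B₂ w = 0) :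
    adjoint A₁ u + adjoint A₂ w = 0 := by
  set v := adjoint A₁ u + adjoint A₂ w
  suffices ‖v‖ ^ 2 ≤ 0 by simpa using this
  refine le_of_forall_pos_le_add fun δ hδ => ?_
  obtain ⟨y, hxy, hy⟩ := happrox v (δ / (‖w‖ + 1)) (by positivity)
  have hv : ⟪v, v⟫_𝕜 = ⟪w, A₂ v - B₂ y⟫_𝕜 := by
    rw [inner_adjoint_add_adjoint_eq A₁ A₂ B₁ B₂ hxy, hB, inner_zero_left, zero_add]
  calc ‖v‖ ^ 2 = ‖⟪w, A₂ v - B₂ y⟫_𝕜‖ := by rw [← hv, inner_self_eq_norm_sq_to_K]; simp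
    _ ≤ ‖w‖ * (δ / (‖w‖ + 1)) := (norm_inner_le_norm _ _).trans (by gcongr)
    _ ≤ 0 + δ := by
        rw [zero_add, mul_div_assoc']
        exact div_le_of_le_mul₀ (by positivity) hδ.le (by linarith)

end InnerProduct

/-- Necessary conditions for the mixed exact/approximate range inclusion goal. -/
theorem mixed_goal_necessary_conditions
    {H1 H2 H4 H5 : Type*}
    [NormedAddCommGroup H1] [InnerProductSpace ℝ H1] [CompleteSpace H1]
    [NormedAddCommGroup H2] [InnerProductSpace ℝ H2] [CompleteSpace H2]
    [NormedAddCommGroup H4] [InnerProductSpace ℝ H4] [CompleteSpace H4]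
    [NormedAddCommGroup H5] [InnerProductSpace ℝ H5] [CompleteSpace H5]
    (A1 : H1 →L[ℝ] H4) (A2 : H1 →L[ℝ] H5)
    (B1 : H2 →L[ℝ] H4) (B2 : H2 →L[ℝ] H5)
    (hgoal : ∀ h1 : H1, ∀ ε : ℝ, 0 < ε →
      ∃ h2 : H2, A1 h1 = B1 h2 ∧ ‖A2 h1 - B2 h2‖ ≤ ε) :
    (∃ C : ℝ, 0 < C ∧ ∀ h4 : H4, ‖adjoint A1 h4‖ ≤ C * ‖adjoint B1 h4‖) ∧
    (∀ (h4 : H4) (h5 : H5), adjoint B1 h4 + adjoint B2 h5 = 0 →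
      adjoint A1 h4 + adjoint A2 h5 = 0) := by
  have hrange : Set.range A1 ⊆ Set.range B1 := by
    rintro _ ⟨h1, rfl⟩
    obtain ⟨h2, h, -⟩ := hgoal h1 1 one_pos
    exact ⟨h2, h.symm⟩
  exact ⟨A1.exists_norm_adjoint_le_of_range_le B1 hrange,
    fun _ _ => A1.adjoint_add_adjoint_eq_zero_of_approx A2 B1 B2 hgoal⟩
end

section
/- (Main theorem, (i) ⇒ (iii)) Suppose that for every h1 ∈ H1 and every ε > 0 there exists h2 ∈ H2 with A1 h1 = B1 h2 and ‖A2 h1 − B2 h2‖ ≤ ε. Let Π : H2 → H2 be the orthogonal projection onto ker(B1). Then there exist a continuous linear map D1 : H2 → H1 and a linear map D2 : H2 → H1 (not necessarily continuous) such that A1* = D1 ∘ B1* and A2* = (D1 + D2 ∘ Π) ∘ B2*. -/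
/-!
Since `range A1 ≤ range B1`, the map sending `h1` to the unique preimage of `A1 h1` in
`(ker B1)ᗮ` is linear, and continuous by the closed graph theorem; this `C` satisfies
`A1 = B1 ∘ C`, and `D1 := C*` gives the first identity. The approximation hypothesis then says
that `A2 h1 - B2 (C h1)` lies in the closure of `B2 (ker B1)`. If `Π (B2* h5) = 0`, then `h5` is
orthogonal to `B2 (ker B1)`, hence to its closure, so `A2* h5 = C* (B2* h5)`. Thus
`ker (Π ∘ B2*) ≤ ker (A2* - C* ∘ B2*)`, and pure linear algebra yields `D2` with
`D2 ∘ Π ∘ B2* = A2* - C* ∘ B2*`.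
-/
open ContinuousLinearMap Filter

namespace LinearMap

variable {K V W U : Type*} [DivisionRing K] [AddCommGroup V] [Module K V]
  [AddCommGroup W] [Module K W] [AddCommGroup U] [Module K U]

theorem exists_comp_eq_of_range_le (B : V →ₗ[K] W) (A : U →ₗ[K] W) (h : range A ≤ range B) :
    ∃ C : U →ₗ[K] V, B ∘ₗ C = A := by
  obtain ⟨C, hC⟩ := Module.projective_lifting_property B.rangeRestrict
    (A.codRestrict (range B) fun x => h (mem_range_self A x)) B.surjective_rangeRestrict
  exact ⟨C, ext fun x => congrArg Subtype.val (LinearMap.congr_fun hC x)⟩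

theorem exists_comp_eq_of_ker_le (S : V →ₗ[K] W) (T : V →ₗ[K] U) (h : ker S ≤ ker T) :
    ∃ D : W →ₗ[K] U, D ∘ₗ S = T := by
  obtain ⟨R, hR⟩ := S.rangeRestrict.exists_rightInverse_of_surjective S.range_rangeRestrict
  obtain ⟨D, hD⟩ := exists_extend (T ∘ₗ R)
  refine ⟨D, ext fun x => ?_⟩
  have hRx : S (R (S.rangeRestrict x)) = S x :=
    congrArg Subtype.val (LinearMap.congr_fun hR (S.rangeRestrict x))
  have hker : R (S.rangeRestrict x) - x ∈ ker T := h (by simp [hRx])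
  calc D (S x) = T (R (S.rangeRestrict x)) := LinearMap.congr_fun hD (S.rangeRestrict x)
    _ = T x := sub_eq_zero.mp (by simpa using hker)

end LinearMap

section ClosedGraph

variable {𝕜 E F G : Type*} [RCLike 𝕜]
  [NormedAddCommGroup E] [InnerProductSpace 𝕜 E] [CompleteSpace E]
  [NormedAddCommGroup F] [NormedSpace 𝕜 F]
  [NormedAddCommGroup G] [NormedSpace 𝕜 G] [CompleteSpace G]

theorem LinearMap.continuous_of_range_le_orthogonal_ker (B : E →L[𝕜] F) (C : G →ₗ[𝕜] E)
    (hC : LinearMap.range C ≤ (LinearMap.ker (B : E →ₗ[𝕜] F))ᗮ)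
    (hBC : Continuous (B ∘ C)) : Continuous C := by
  set K := LinearMap.ker (B : E →ₗ[𝕜] F)
  refine C.continuous_of_seq_closed_graph fun u x y hu hy => ?_
  have hyK : y ∈ Kᗮ := K.isClosed_orthogonal.mem_of_tendsto hy
    (Eventually.of_forall fun n => hC (LinearMap.mem_range_self C (u n)))
  have hBy : B y = B (C x) :=
    tendsto_nhds_unique ((B.continuous.tendsto y).comp hy) ((hBC.tendsto x).comp hu)
  have hdiff : y - C x ∈ K ⊓ Kᗮ :=
    ⟨by simp [K, hBy], sub_mem hyK (hC (LinearMap.mem_range_self C x))⟩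
  rw [K.inf_orthogonal_eq_bot, Submodule.mem_bot, sub_eq_zero] at hdiff
  exact hdiff

theorem ContinuousLinearMap.exists_comp_eq_of_range_le (B : E →L[𝕜] F) (A : G →L[𝕜] F)
    (h : LinearMap.range (A : G →ₗ[𝕜] F) ≤ LinearMap.range (B : E →ₗ[𝕜] F)) :
    ∃ C : G →L[𝕜] E, B ∘L C = A := by
  set K := LinearMap.ker (B : E →ₗ[𝕜] F)
  obtain ⟨C₀, hC₀⟩ := LinearMap.exists_comp_eq_of_range_le (B : E →ₗ[𝕜] F) (A : G →ₗ[𝕜] F) h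
  let C : G →ₗ[𝕜] E := C₀ - K.starProjection.toLinearMap ∘ₗ C₀
  have hBC : (B : E →ₗ[𝕜] F) ∘ₗ C = A := by
    ext x
    have hK : B (K.starProjection (C₀ x)) = 0 := K.starProjection_apply_mem (C₀ x)
    simp [C, hK, ← LinearMap.congr_fun hC₀ x]
  have hcont : Continuous C := LinearMap.continuous_of_range_le_orthogonal_ker B C
    (by rintro _ ⟨x, rfl⟩; exact K.sub_starProjection_mem_orthogonal (C₀ x))
    (by change Continuous ((B : E →ₗ[𝕜] F) ∘ₗ C); rw [hBC]; exact A.continuous)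
  exact ⟨⟨C, hcont⟩, ContinuousLinearMap.coe_injective hBC⟩

end ClosedGraph

theorem sub_mem_closure_map_ker {𝕜 E G F₁ F₂ : Type*} [NormedField 𝕜]
    [NormedAddCommGroup E] [NormedSpace 𝕜 E] [NormedAddCommGroup G] [NormedSpace 𝕜 G]
    [NormedAddCommGroup F₁] [NormedSpace 𝕜 F₁] [NormedAddCommGroup F₂] [NormedSpace 𝕜 F₂]
    {A₁ : G →L[𝕜] F₁} {A₂ : G →L[𝕜] F₂} {B₁ : E →L[𝕜] F₁} {B₂ : E →L[𝕜] F₂}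
    (happrox : ∀ x : G, ∀ ε : ℝ, 0 < ε → ∃ y : E, A₁ x = B₁ y ∧ ‖A₂ x - B₂ y‖ ≤ ε)
    {C : G →L[𝕜] E} (hC : B₁ ∘L C = A₁) (x : G) :
    A₂ x - B₂ (C x) ∈
      ((LinearMap.ker (B₁ : E →ₗ[𝕜] F₁)).map (B₂ : E →ₗ[𝕜] F₂)).topologicalClosure := by
  rw [← SetLike.mem_coe, Submodule.topologicalClosure_coe, Metric.mem_closure_iff]
  intro ε hε
  obtain ⟨y, hy, hyε⟩ := happrox x (ε / 2) (half_pos hε)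
  have hker : y - C x ∈ LinearMap.ker (B₁ : E →ₗ[𝕜] F₁) := by
    simp [← hy, ← DFunLike.congr_fun hC x]
  refine ⟨B₂ (y - C x), ⟨y - C x, hker, rfl⟩, ?_⟩
  rw [dist_eq_norm, map_sub, sub_sub_sub_cancel_right]
  linarith

section Adjoint

variable {𝕜 E F G : Type*} [RCLike 𝕜]
  [NormedAddCommGroup E] [InnerProductSpace 𝕜 E] [CompleteSpace E]
  [NormedAddCommGroup F] [InnerProductSpace 𝕜 F] [CompleteSpace F]
  [NormedAddCommGroup G] [InnerProductSpace 𝕜 G] [CompleteSpace G]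

theorem ContinuousLinearMap.mem_orthogonal_map_iff (T : E →L[𝕜] F) (K : Submodule 𝕜 E) (y : F) :
    y ∈ (K.map (T : E →ₗ[𝕜] F))ᗮ ↔ adjoint T y ∈ Kᗮ := by
  simp [Submodule.mem_orthogonal, adjoint_inner_right]

theorem ContinuousLinearMap.adjoint_apply_eq_of_sub_mem_closure (A : G →L[𝕜] F) (B : E →L[𝕜] F)
    (C : G →L[𝕜] E) (K : Submodule 𝕜 E)
    (hres : ∀ x, A x - B (C x) ∈ (K.map (B : E →ₗ[𝕜] F)).topologicalClosure)
    {y : F} (hy : adjoint B y ∈ Kᗮ) : adjoint A y = adjoint C (adjoint B y) := by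
  have hy' : y ∈ (K.map (B : E →ₗ[𝕜] F)).topologicalClosureᗮ := by
    rwa [Submodule.orthogonal_closure, mem_orthogonal_map_iff]
  refine ext_inner_right 𝕜 fun x => ?_
  rw [adjoint_inner_left, adjoint_inner_left, adjoint_inner_left, ← sub_eq_zero,
    ← inner_sub_right]
  exact (Submodule.mem_orthogonal' _ _).1 hy' _ (hres x)

end Adjoint


/-- Main theorem, (i) ⇒ (iii): mixed continuous and non-continuous factorization. -/
theorem mixed_goal_implies_factorization
    {H1 H2 H4 H5 : Type*}
    [NormedAddCommGroup H1] [InnerProductSpace ℝ H1] [CompleteSpace H1]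
    [NormedAddCommGroup H2] [InnerProductSpace ℝ H2] [CompleteSpace H2]
    [NormedAddCommGroup H4] [InnerProductSpace ℝ H4] [CompleteSpace H4]
    [NormedAddCommGroup H5] [InnerProductSpace ℝ H5] [CompleteSpace H5]
    (A1 : H1 →L[ℝ] H4) (A2 : H1 →L[ℝ] H5)
    (B1 : H2 →L[ℝ] H4) (B2 : H2 →L[ℝ] H5)
    (P : H2 →L[ℝ] H2)
    (hP : P = (LinearMap.ker (B1 : H2 →ₗ[ℝ] H4)).subtypeL.comp (Submodule.orthogonalProjectionOnto (LinearMap.ker (B1 : H2 →ₗ[ℝ] H4))))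
    (hgoal : ∀ h1 : H1, ∀ ε : ℝ, 0 < ε →
      ∃ h2 : H2, A1 h1 = B1 h2 ∧ ‖A2 h1 - B2 h2‖ ≤ ε) :
    ∃ (D1 : H2 →L[ℝ] H1) (D2 : H2 →ₗ[ℝ] H1),
      (∀ h4 : H4, adjoint A1 h4 = D1 (adjoint B1 h4)) ∧
      (∀ h5 : H5, adjoint A2 h5 = D1 (adjoint B2 h5) + D2 (P (adjoint B2 h5))) := by
  set K := LinearMap.ker (B1 : H2 →ₗ[ℝ] H4)
  obtain ⟨C, hC⟩ := B1.exists_comp_eq_of_range_le A1 <| by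
    rintro _ ⟨x, rfl⟩
    obtain ⟨y, hy, -⟩ := hgoal x 1 one_pos
    exact ⟨y, hy.symm⟩
  have hres := sub_mem_closure_map_ker hgoal hC
  obtain ⟨D2, hD2⟩ := LinearMap.exists_comp_eq_of_ker_le
    ((P ∘L adjoint B2 : H5 →L[ℝ] H2) : H5 →ₗ[ℝ] H2)
    ((adjoint A2 - adjoint C ∘L adjoint B2 : H5 →L[ℝ] H1) : H5 →ₗ[ℝ] H1) <| by
      intro y hy
      have hyK : adjoint B2 y ∈ Kᗮ := by
        rw [← K.starProjection_apply_eq_zero_iff, Submodule.starProjection, ← hP]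
        exact hy
      simpa [sub_eq_zero] using adjoint_apply_eq_of_sub_mem_closure A2 B2 C K hres hyK
  refine ⟨adjoint C, D2, fun h4 => by rw [← hC, adjoint_comp]; rfl, fun h5 => ?_⟩
  rw [← add_sub_cancel (adjoint C (adjoint B2 h5)) (adjoint A2 h5)]
  exact congrArg _ (LinearMap.congr_fun hD2 h5).symm
end

section
/- (Main theorem, (iii) ⇒ (ii)) Let Π : H2 → H2 be the orthogonal projection onto ker(B1). Suppose there exist a continuous linear map D1 : H2 → H1 and a linear map D2 : H2 → H1 such that A1* = D1 ∘ B1* and A2* = (D1 + D2 ∘ Π) ∘ B2*. Then: (a) there exists C > 0 such that ‖A1* h4‖ ≤ C ‖B1* h4‖ for all h4 ∈ H4; and (b) for every h5 ∈ H5 and every sequence (y_n) in H4 such that B1* y_n converges to B2* h5 in H2, the sequence A1* y_n converges to A2* h5 in H1. -/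
open ContinuousLinearMap Filter

/-! Part (a) is the operator-norm bound of `D1`. For part (b), `B2* h5` is a limit of vectors
`B1* y n`, so it lies in the closure of `range B1* = (ker B1)ᗮ`; hence `Π` annihilates it, the
discontinuous `D2` drops out, and continuity of `D1` carries the limit over. -/

theorem ContinuousLinearMap.mem_orthogonal_ker_of_tendsto_adjoint {𝕜 E F ι : Type*} [RCLike 𝕜]
    [NormedAddCommGroup E] [InnerProductSpace 𝕜 E] [CompleteSpace E]
    [NormedAddCommGroup F] [InnerProductSpace 𝕜 F] [CompleteSpace F]
    (T : E →L[𝕜] F) {l : Filter ι} [l.NeBot] {y : ι → F} {z : E}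
    (h : Tendsto (fun i => adjoint T (y i)) l (nhds z)) :
    z ∈ (LinearMap.ker (T : E →ₗ[𝕜] F))ᗮ := by
  rw [orthogonal_ker]
  exact (adjoint T).range.isClosed_topologicalClosure.mem_of_tendsto h
    (Eventually.of_forall fun i => Submodule.le_topologicalClosure _ ⟨y i, rfl⟩)

/-- Main theorem, (iii) ⇒ (ii): factorization implies mixed majorization. -/
theorem mixed_factorization_implies_majorization
    {H1 H2 H4 H5 : Type*}
    [NormedAddCommGroup H1] [InnerProductSpace ℝ H1] [CompleteSpace H1]
    [NormedAddCommGroup H2] [InnerProductSpace ℝ H2] [CompleteSpace H2]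
    [NormedAddCommGroup H4] [InnerProductSpace ℝ H4] [CompleteSpace H4]
    [NormedAddCommGroup H5] [InnerProductSpace ℝ H5] [CompleteSpace H5]
    (A1 : H1 →L[ℝ] H4) (A2 : H1 →L[ℝ] H5)
    (B1 : H2 →L[ℝ] H4) (B2 : H2 →L[ℝ] H5)
    (P : H2 →L[ℝ] H2)
    (hP : P = (LinearMap.ker (B1 : H2 →ₗ[ℝ] H4)).subtypeL.comp
      (Submodule.orthogonalProjectionOnto (LinearMap.ker (B1 : H2 →ₗ[ℝ] H4))))
    (D1 : H2 →L[ℝ] H1) (D2 : H2 →ₗ[ℝ] H1)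
    (hD1 : ∀ h4 : H4, adjoint A1 h4 = D1 (adjoint B1 h4))
    (hD2 : ∀ h5 : H5, adjoint A2 h5 = D1 (adjoint B2 h5) + D2 (P (adjoint B2 h5))) :
    (∃ C : ℝ, 0 < C ∧ ∀ h4 : H4, ‖adjoint A1 h4‖ ≤ C * ‖adjoint B1 h4‖) ∧
    (∀ (h5 : H5) (y : ℕ → H4),
      Tendsto (fun n => adjoint B1 (y n)) atTop (nhds (adjoint B2 h5)) →
      Tendsto (fun n => adjoint A1 (y n)) atTop (nhds (adjoint A2 h5))) := by
  refine ⟨?_, fun h5 y hy => ?_⟩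
  · obtain ⟨C, hC, hD1_le⟩ := D1.bound
    exact ⟨C, hC, fun h4 => hD1 h4 ▸ hD1_le _⟩
  · have hP_B2 : P (adjoint B2 h5) = 0 := by
      rw [hP, comp_apply, Submodule.orthogonalProjectionOnto_apply_of_mem_orthogonal
        (B1.mem_orthogonal_ker_of_tendsto_adjoint hy)]
      rfl
    rw [hD2, hP_B2, map_zero, add_zero]
    exact ((D1.continuous.tendsto _).comp hy).congr fun n => (hD1 (y n)).symm
end

section
/- (Main theorem, (ii) ⇒ (i)) Suppose: (a) there exists C > 0 such that ‖A1* h4‖ ≤ C ‖B1* h4‖ for all h4 ∈ H4; and (b) for every h5 ∈ H5 and every sequence (y_n) in H4 such that B1* y_n converges to B2* h5 in H2, the sequence A1* y_n converges to A2* h5 in H1. Then for every h1 ∈ H1 and every ε > 0 there exists h2 ∈ H2 such that A1 h1 = B1 h2 and ‖A2 h1 − B2 h2‖ ≤ ε. -/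
open ContinuousLinearMap Filter

open scoped RealInnerProductSpace

/-- Douglas-type range inclusion from majorization of adjoints. -/
lemma douglas_range_incl {H1 H2 H4 : Type*}
    [NormedAddCommGroup H1] [InnerProductSpace ℝ H1] [CompleteSpace H1]
    [NormedAddCommGroup H2] [InnerProductSpace ℝ H2] [CompleteSpace H2]
    [NormedAddCommGroup H4] [InnerProductSpace ℝ H4] [CompleteSpace H4]
    (A1 : H1 →L[ℝ] H4) (B1 : H2 →L[ℝ] H4) (C : ℝ)
    (h : ∀ y, ‖adjoint A1 y‖ ≤ C * ‖adjoint B1 y‖) (h1 : H1) :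
    ∃ h2, B1 h2 = A1 h1 := by
  set S : H4 →ₗ[ℝ] H2 := (adjoint B1 : H4 →L[ℝ] H2).toLinearMap with hS
  set g : H4 →ₗ[ℝ] ℝ := ((innerSL ℝ (A1 h1)) : H4 →L[ℝ] ℝ).toLinearMap with hg
  have hgy : ∀ y, g y = ⟪adjoint A1 y, h1⟫ := by
    intro y
    simp only [hg, ContinuousLinearMap.coe_coe, innerSL_apply_apply]
    rw [adjoint_inner_left, real_inner_comm]
  have hker : LinearMap.ker S ≤ LinearMap.ker g := by
    intro y hy
    have hy' : adjoint B1 y = 0 := hy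
    have : ‖adjoint A1 y‖ ≤ 0 := by simpa [hy'] using h y
    have hA : adjoint A1 y = 0 := by
      have := norm_nonneg (adjoint A1 y)
      have : ‖adjoint A1 y‖ = 0 := le_antisymm ‹‖adjoint A1 y‖ ≤ 0› this
      simpa using this
    simp only [LinearMap.mem_ker]
    rw [hgy, hA, inner_zero_left]
  set φq : (H4 ⧸ LinearMap.ker S) →ₗ[ℝ] ℝ := (LinearMap.ker S).liftQ g hker with hφq
  set e := S.quotKerEquivRange with he
  set φ₀ : LinearMap.range S →ₗ[ℝ] ℝ := φq ∘ₗ (e.symm : LinearMap.range S →ₗ[ℝ] (H4 ⧸ LinearMap.ker S)) with hφ₀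
  have hφ₀y : ∀ (y : H4) (m : S y ∈ LinearMap.range S), φ₀ ⟨S y, m⟩ = g y := by
    intro y m
    have : e.symm ⟨S y, m⟩ = Submodule.Quotient.mk y := by
      have h' := S.quotKerEquivRange_symm_apply_image y m
      rwa [Submodule.mkQ_apply] at h'
    simp only [hφ₀, LinearMap.coe_comp, Function.comp_apply, LinearEquiv.coe_coe, this]
    simp [hφq]
  have hbound : ∀ x : LinearMap.range S, ‖φ₀ x‖ ≤ (C * ‖h1‖) * ‖x‖ := by
    rintro ⟨x, y, rfl⟩
    rw [hφ₀y y ⟨y, rfl⟩, hgy]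
    calc ‖(⟪adjoint A1 y, h1⟫ : ℝ)‖ ≤ ‖adjoint A1 y‖ * ‖h1‖ := by
          simpa using abs_real_inner_le_norm (adjoint A1 y) h1
      _ ≤ (C * ‖adjoint B1 y‖) * ‖h1‖ :=
          mul_le_mul_of_nonneg_right (h y) (norm_nonneg _)
      _ = (C * ‖h1‖) * ‖(⟨S y, ⟨y, rfl⟩⟩ : LinearMap.range S)‖ := by
          simp [hS]; ring
  set φc : (LinearMap.range S : Submodule ℝ H2) →L[ℝ] ℝ :=
    LinearMap.mkContinuous φ₀ (C * ‖h1‖) hbound with hφc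
  obtain ⟨Φ, hΦ, -⟩ := exists_extension_norm_eq (LinearMap.range S) φc
  set h2 := (InnerProductSpace.toDual ℝ H2).symm Φ with hh2
  refine ⟨h2, ?_⟩
  apply ext_inner_right ℝ
  intro y
  have h5 : ⟪h2, adjoint B1 y⟫ = Φ (adjoint B1 y) := InnerProductSpace.toDual_symm_apply
  have h6 : Φ (adjoint B1 y) = φc ⟨S y, ⟨y, rfl⟩⟩ := hΦ ⟨S y, ⟨y, rfl⟩⟩
  have h7 : (φc ⟨S y, ⟨y, rfl⟩⟩ : ℝ) = g y := hφ₀y y ⟨y, rfl⟩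
  calc ⟪B1 h2, y⟫ = ⟪h2, adjoint B1 y⟫ := (adjoint_inner_right _ _ _).symm
    _ = Φ (adjoint B1 y) := h5
    _ = g y := by rw [h6, h7]
    _ = ⟪A1 h1, y⟫ := by rw [hgy, adjoint_inner_left]; exact real_inner_comm _ _

/-- Main theorem, (ii) ⇒ (i): mixed majorization implies the mixed
exact/approximate range inclusion goal. -/
theorem mixed_majorization_implies_goal
    {H1 H2 H4 H5 : Type*}
    [NormedAddCommGroup H1] [InnerProductSpace ℝ H1] [CompleteSpace H1]
    [NormedAddCommGroup H2] [InnerProductSpace ℝ H2] [CompleteSpace H2]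
    [NormedAddCommGroup H4] [InnerProductSpace ℝ H4] [CompleteSpace H4]
    [NormedAddCommGroup H5] [InnerProductSpace ℝ H5] [CompleteSpace H5]
    (A1 : H1 →L[ℝ] H4) (A2 : H1 →L[ℝ] H5)
    (B1 : H2 →L[ℝ] H4) (B2 : H2 →L[ℝ] H5)
    (ha : ∃ C : ℝ, 0 < C ∧ ∀ h4 : H4, ‖adjoint A1 h4‖ ≤ C * ‖adjoint B1 h4‖)
    (hb : ∀ (h5 : H5) (y : ℕ → H4),
      Tendsto (fun n => adjoint B1 (y n)) atTop (nhds (adjoint B2 h5)) →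
      Tendsto (fun n => adjoint A1 (y n)) atTop (nhds (adjoint A2 h5))) :
    ∀ h1 : H1, ∀ ε : ℝ, 0 < ε →
      ∃ h2 : H2, A1 h1 = B1 h2 ∧ ‖A2 h1 - B2 h2‖ ≤ ε := by
  intro h1 ε hε
  obtain ⟨C, hC, hCb⟩ := ha
  obtain ⟨h2₀, hB1⟩ := douglas_range_incl A1 B1 C hCb h1
  -- W = B2 (ker B1)
  set W : Submodule ℝ H5 :=
    Submodule.map (B2 : H2 →ₗ[ℝ] H5) (LinearMap.ker (B1 : H2 →ₗ[ℝ] H4)) with hW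
  -- the key vector
  set x : H5 := A2 h1 - B2 h2₀ with hx
  -- range of adjoint B1
  set R : Submodule ℝ H2 := LinearMap.range ((adjoint B1 : H4 →L[ℝ] H2) : H4 →ₗ[ℝ] H2) with hR
  -- ker B1 = Rᗮ
  have hkerR : (LinearMap.ker (B1 : H2 →ₗ[ℝ] H4) : Submodule ℝ H2) = Rᗮ := by
    ext z
    have hz1 : z ∈ LinearMap.ker (B1 : H2 →ₗ[ℝ] H4) ↔ B1 z = 0 := Iff.rfl
    constructor
    · intro hz
      rw [Submodule.mem_orthogonal]
      rintro u ⟨w, rfl⟩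
      simp only [ContinuousLinearMap.coe_coe]
      rw [adjoint_inner_left, hz1.mp hz, inner_zero_right]
    · intro hz
      rw [Submodule.mem_orthogonal] at hz
      have hall : ∀ w : H4, (⟪w, B1 z⟫ : ℝ) = 0 := by
        intro w
        have h' := hz (adjoint B1 w) ⟨w, rfl⟩
        change (⟪adjoint B1 w, z⟫ : ℝ) = 0 at h'
        rwa [adjoint_inner_left] at h'
      exact hz1.mpr (inner_self_eq_zero.mp (hall (B1 z)))
  -- x ∈ Wᗮᗮ
  have hxmem : x ∈ Wᗮᗮ := by
    rw [Submodule.mem_orthogonal]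
    intro h5 hh5
    rw [Submodule.mem_orthogonal] at hh5
    -- adjoint B2 h5 ∈ (ker B1)ᗮ = Rᗮᗮ = closure R
    have h5R : adjoint B2 h5 ∈ closure (R : Set H2) := by
      have hmem : adjoint B2 h5 ∈ (LinearMap.ker (B1 : H2 →ₗ[ℝ] H4) : Submodule ℝ H2)ᗮ := by
        rw [Submodule.mem_orthogonal]
        intro k hk
        have := hh5 (B2 k) ⟨k, hk, rfl⟩
        rwa [← adjoint_inner_right] at this
      rw [hkerR, Submodule.orthogonal_orthogonal_eq_closure] at hmem
      rwa [← Submodule.topologicalClosure_coe]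
    obtain ⟨u, hu, hulim⟩ := mem_closure_iff_seq_limit.mp h5R
    choose y hy using hu
    have hylim : Tendsto (fun n => adjoint B1 (y n)) atTop (nhds (adjoint B2 h5)) := by
      convert hulim using 2 with n
      exact hy n
    have hAlim := hb h5 y hylim
    -- two computations of the limit of ⟪adjoint A1 (y n), h1⟫
    have lim1 : Tendsto (fun n => (⟪adjoint A1 (y n), h1⟫ : ℝ)) atTop
        (nhds ⟪adjoint A2 h5, h1⟫) := hAlim.inner tendsto_const_nhds
    have lim2 : Tendsto (fun n => (⟪adjoint A1 (y n), h1⟫ : ℝ)) atTop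
        (nhds ⟪adjoint B2 h5, h2₀⟫) := by
      have heq : ∀ n, (⟪adjoint A1 (y n), h1⟫ : ℝ) = ⟪adjoint B1 (y n), h2₀⟫ := by
        intro n
        rw [adjoint_inner_left, adjoint_inner_left, ← hB1]
      simp only [heq]
      exact hylim.inner tendsto_const_nhds
    have hkey : (⟪adjoint A2 h5, h1⟫ : ℝ) = ⟪adjoint B2 h5, h2₀⟫ :=
      tendsto_nhds_unique lim1 lim2
    rw [adjoint_inner_left, adjoint_inner_left] at hkey
    rw [hx, inner_sub_right, hkey, sub_self]
  -- conclude: x is in the closure of W, pick an ε-approximation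
  have hxcl : x ∈ closure (W : Set H5) := by
    rw [← Submodule.topologicalClosure_coe, ← Submodule.orthogonal_orthogonal_eq_closure]
    exact hxmem
  obtain ⟨u, huW, hud⟩ := Metric.mem_closure_iff.mp hxcl ε hε
  obtain ⟨k, hk, rfl⟩ := huW
  refine ⟨h2₀ + k, ?_, ?_⟩
  · rw [map_add, show B1 k = 0 from LinearMap.mem_ker.mp hk, add_zero, hB1]
  · have : A2 h1 - B2 (h2₀ + k) = x - B2 k := by
      rw [hx, map_add]; abel
    rw [this]
    have : ‖x - (B2 : H2 →ₗ[ℝ] H5) k‖ = dist x ((B2 : H2 →ₗ[ℝ] H5) k) := (dist_eq_norm _ _).symm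
    simp only [ContinuousLinearMap.coe_coe] at this ⊢
    rw [this]
    exact le_of_lt hud
end

section
/- (Main theorem, full equivalence) The following are equivalent: (i) for every h1 ∈ H1 and every ε > 0 there exists h2 ∈ H2 with A1 h1 = B1 h2 and ‖A2 h1 − B2 h2‖ ≤ ε; (ii) there exists C > 0 with ‖A1* h4‖ ≤ C ‖B1* h4‖ for all h4 ∈ H4, and for every h5 ∈ H5 and every sequence (y_n) in H4 with B1* y_n → B2* h5 in H2 one has A1* y_n → A2* h5 in H1; (iii) denoting by Π : H2 → H2 the orthogonal projection onto ker(B1), there exist a continuous linear map D1 : H2 → H1 and a linear map D2 : H2 → H1 (not necessarily continuous) with A1* = D1 ∘ B1* and A2* = (D1 + D2 ∘ Π) ∘ B2*. -/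
/-!
Each of (i), (ii), (iii) is equivalent to the existence of a bounded `D₁` with `D₁ B₁* = A₁*`
that agrees with `A₂*` on every `h₅` for which `B₂* h₅` lies in `(ker B₁)ᗮ`, the closure of the
range of `B₁*` and the kernel of `Π`.

For (i), Douglas' lemma (via the closed graph theorem) turns `range A₁ ⊆ range B₁` into
`A₁ = B₁ D`, and `D₁ = D*`; the approximation condition then says that `A₂ - B₂ D` maps into the
closure of `B₂ (ker B₁)`, whose orthogonal complement is `{h₅ | B₂* h₅ ∈ (ker B₁)ᗮ}`.
For (ii), the majorization defines `D₁` on the range of `B₁*` by continuity, and the sequential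
condition is exactly the agreement on the closure of that range. For (iii), a linear `D₂` with
`A₂* - D₁ B₂* = D₂ Π B₂*` exists iff `ker (Π B₂*) ⊆ ker (A₂* - D₁ B₂*)`.
-/

open ContinuousLinearMap Filter Topology

namespace LinearMap

variable {K V W U : Type*} [DivisionRing K]
  [AddCommGroup V] [Module K V] [AddCommGroup W] [Module K W] [AddCommGroup U] [Module K U]

theorem exists_comp_eq_iff_ker_le (f : V →ₗ[K] W) (g : V →ₗ[K] U) :
    (∃ D : W →ₗ[K] U, D ∘ₗ f = g) ↔ ker f ≤ ker g := by
  refine ⟨?_, fun h => ?_⟩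
  · rintro ⟨D, rfl⟩
    exact ker_le_ker_comp f D
  obtain ⟨D, hD⟩ := exists_extend (f.ker.liftQ g h ∘ₗ f.quotKerEquivRange.symm.toLinearMap)
  refine ⟨D, ext fun v => ?_⟩
  simpa using congr($hD ⟨f v, mem_range_self f v⟩)

theorem exists_eq_add_comp_iff (f : V →ₗ[K] W) (g h : V →ₗ[K] U) :
    (∃ D : W →ₗ[K] U, ∀ v, g v = h v + D (f v)) ↔ ∀ v, f v = 0 → g v = h v := by
  have hD : ∀ D : W →ₗ[K] U, (∀ v, g v = h v + D (f v)) ↔ D ∘ₗ f = g - h := fun D => by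
    rw [eq_sub_iff_add_eq', LinearMap.ext_iff]
    exact forall_congr' fun v => eq_comm
  simp only [hD, exists_comp_eq_iff_ker_le, SetLike.le_def, mem_ker, sub_apply, sub_eq_zero]

end LinearMap

namespace ContinuousLinearMap

section Normed

variable {𝕜 E F G H : Type*} [NontriviallyNormedField 𝕜]
  [NormedAddCommGroup E] [NormedSpace 𝕜 E] [NormedAddCommGroup F] [NormedSpace 𝕜 F]
  [NormedAddCommGroup G] [NormedSpace 𝕜 G] [NormedAddCommGroup H] [NormedSpace 𝕜 H]

theorem forall_tendsto_iff_of_comp_eq {T : E →L[𝕜] F} {S : E →L[𝕜] G}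
    {D : F →L[𝕜] G} (hD : D ∘L T = S) (x : F) (v : G) :
    (∀ y : ℕ → E, Tendsto (fun n => T (y n)) atTop (𝓝 x) →
      Tendsto (fun n => S (y n)) atTop (𝓝 v)) ↔
    (x ∈ T.range.topologicalClosure → v = D x) := by
  have hS : ∀ y : ℕ → E, Tendsto (fun n => T (y n)) atTop (𝓝 x) →
      Tendsto (fun n => S (y n)) atTop (𝓝 (D x)) := fun y hy => by
    rw [← hD]
    exact (D.continuous.tendsto x).comp hy
  rw [← SetLike.mem_coe, Submodule.topologicalClosure_coe]
  constructor
  · intro h hx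
    obtain ⟨u, hu_mem, hu⟩ := mem_closure_iff_seq_limit.mp hx
    choose y hy using hu_mem
    rw [← show (fun n => T (y n)) = u from funext hy] at hu
    exact tendsto_nhds_unique (h y hu) (hS y hu)
  · intro h y hy
    exact h (mem_closure_of_tendsto hy (.of_forall fun n => ⟨y n, rfl⟩)) ▸ hS y hy

theorem forall_exists_approx_iff_mem_closure {A₁ : E →L[𝕜] G} {A₂ : E →L[𝕜] H}
    {B₁ : F →L[𝕜] G} (B₂ : F →L[𝕜] H) {D : E →L[𝕜] F} (hD : B₁ ∘L D = A₁) (x : E) :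
    (∀ ε : ℝ, 0 < ε → ∃ y : F, A₁ x = B₁ y ∧ ‖A₂ x - B₂ y‖ ≤ ε) ↔
      A₂ x - B₂ (D x) ∈ (B₁.ker.map (B₂ : F →ₗ[𝕜] H)).topologicalClosure := by
  have hker : ∀ y, A₁ x = B₁ y ↔ y - D x ∈ B₁.ker := fun y => by
    rw [LinearMap.mem_ker, coe_coe, map_sub, sub_eq_zero, ← hD, comp_apply, eq_comm]
  have hdist : ∀ y, ‖A₂ x - B₂ y‖ = dist (A₂ x - B₂ (D x)) (B₂ (y - D x)) := fun y => by
    rw [dist_eq_norm, map_sub, sub_sub_sub_cancel_right]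
  rw [← SetLike.mem_coe, Submodule.topologicalClosure_coe, Metric.mem_closure_iff]
  constructor
  · intro h ε hε
    obtain ⟨y, hy, hyε⟩ := h (ε / 2) (half_pos hε)
    exact ⟨B₂ (y - D x), ⟨y - D x, (hker y).mp hy, rfl⟩,
      (hdist y ▸ hyε).trans_lt (half_lt_self hε)⟩
  · intro h ε hε
    obtain ⟨_, ⟨k, hk, rfl⟩, hkε⟩ := h ε hε
    refine ⟨D x + k, (hker _).mpr (by simpa using hk), ?_⟩
    rw [hdist, add_sub_cancel_left]
    exact hkε.le

end Normed

section Douglas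

variable {𝕜 E F G : Type*} [RCLike 𝕜]
  [NormedAddCommGroup E] [NormedSpace 𝕜 E] [NormedAddCommGroup F] [NormedSpace 𝕜 F]
  [NormedAddCommGroup G] [InnerProductSpace 𝕜 G]

theorem exists_comp_eq_of_norm_le [CompleteSpace F] [CompleteSpace G] (S : E →L[𝕜] F)
    (T : E →L[𝕜] G) (C : ℝ) (h : ∀ x, ‖S x‖ ≤ C * ‖T x‖) : ∃ D : G →L[𝕜] F, D ∘L T = S := by
  -- `T x ↦ S x` is bounded on `range T`: extend it to the closure, then by zero on `Kᗮ`.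
  set K := T.range.topologicalClosure
  let e : E →ₗ[𝕜] K := LinearMap.codRestrict K T fun x => T.range.le_topologicalClosure ⟨x, rfl⟩
  have he : DenseRange e := by
    rw [DenseRange, Subtype.dense_iff, ← Set.range_comp]
    exact (Submodule.topologicalClosure_coe _).le
  refine ⟨(S : E →ₗ[𝕜] F).extendOfNorm e ∘L K.orthogonalProjectionOnto, ext fun x => ?_⟩
  have hx : K.orthogonalProjectionOnto (T x) = e x :=
    K.orthogonalProjectionOnto_mem_subspace_eq_self (e x)
  simp only [comp_apply, hx]
  exact LinearMap.extendOfNorm_eq he ⟨C, h⟩ x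

theorem eq_of_mem_orthogonal_ker_of_apply_eq (B : G →L[𝕜] F) {y z : G}
    (hy : y ∈ B.kerᗮ) (hz : z ∈ B.kerᗮ) (h : B y = B z) : y = z := by
  have hK : y - z ∈ B.ker := by simp [h]
  rw [← sub_eq_zero, ← Submodule.mem_bot 𝕜, ← B.ker.inf_orthogonal_eq_bot]
  exact ⟨hK, sub_mem hy hz⟩

theorem exists_comp_eq_of_range_le_s7 [CompleteSpace E] [CompleteSpace G] (A : E →L[𝕜] F)
    (B : G →L[𝕜] F) (h : A.range ≤ B.range) : ∃ D : E →L[𝕜] G, B ∘L D = A := by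
  -- Any linear lift `g` of `A` through `B`, made unique by projecting onto `(ker B)ᗮ`, has a
  -- closed graph.
  obtain ⟨g, hg⟩ := Module.projective_lifting_property (B : G →ₗ[𝕜] F).rangeRestrict
    ((A : E →ₗ[𝕜] F).codRestrict B.range fun x => h ⟨x, rfl⟩) B.surjective_rangeRestrict
  have hBg : ∀ x, B (g x) = A x := fun x => congr(($hg x : F))
  let D : E →ₗ[𝕜] G := g - B.ker.starProjection.toLinearMap ∘ₗ g
  have hD_mem : ∀ x, D x ∈ B.kerᗮ := fun x => B.ker.sub_starProjection_mem_orthogonal (g x)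
  have hBD : ∀ x, B (D x) = A x := fun x => by
    have hK : B (B.ker.starProjection (g x)) = 0 := B.ker.starProjection_apply_mem (g x)
    simp [D, hBg, hK]
  have hD_cont : Continuous D := D.continuous_of_seq_closed_graph fun u x y hu hDu => by
    have hy : y ∈ B.kerᗮ :=
      B.ker.isClosed_orthogonal.mem_of_tendsto hDu (.of_forall fun n => hD_mem (u n))
    have hBy : B y = A x := by
      refine tendsto_nhds_unique ((B.continuous.tendsto y).comp hDu) ?_
      simpa only [Function.comp_def, hBD] using (A.continuous.tendsto x).comp hu
    exact B.eq_of_mem_orthogonal_ker_of_apply_eq hy (hD_mem x) (hBy.trans (hBD x).symm)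
  exact ⟨⟨D, hD_cont⟩, ext hBD⟩

end Douglas

section Hilbert

variable {𝕜 E F G H : Type*} [RCLike 𝕜]
  [NormedAddCommGroup E] [InnerProductSpace 𝕜 E] [CompleteSpace E]
  [NormedAddCommGroup F] [InnerProductSpace 𝕜 F] [CompleteSpace F]
  [NormedAddCommGroup H] [InnerProductSpace 𝕜 H] [CompleteSpace H]

theorem forall_mem_closure_iff (T : E →L[𝕜] F) (W : Submodule 𝕜 F) :
    (∀ x, T x ∈ W.topologicalClosure) ↔ Wᗮ ≤ (adjoint T).ker := by
  rw [← Submodule.orthogonal_orthogonal_eq_closure, ← orthogonal_range]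
  exact ⟨fun h => (Submodule.orthogonal_gc 𝕜 F _ _).mpr (by rintro _ ⟨x, rfl⟩; exact h x),
    fun h x => (Submodule.orthogonal_gc 𝕜 F _ _).mp h ⟨x, rfl⟩⟩

theorem mem_orthogonal_map_iff_s7 (T : E →L[𝕜] F) (K : Submodule 𝕜 E) (z : F) :
    z ∈ (K.map (T : E →ₗ[𝕜] F))ᗮ ↔ adjoint T z ∈ Kᗮ := by
  simp only [Submodule.mem_orthogonal, Submodule.mem_map, forall_exists_index, and_imp,
    forall_apply_eq_imp_iff₂, coe_coe, adjoint_inner_right]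

theorem forall_exists_approx_iff_adjoint [NormedAddCommGroup G] [NormedSpace 𝕜 G]
    {A₁ : E →L[𝕜] G} (A₂ : E →L[𝕜] H) {B₁ : F →L[𝕜] G} (B₂ : F →L[𝕜] H) {D : E →L[𝕜] F}
    (hD : B₁ ∘L D = A₁) :
    (∀ x, ∀ ε : ℝ, 0 < ε → ∃ y : F, A₁ x = B₁ y ∧ ‖A₂ x - B₂ y‖ ≤ ε) ↔
      ∀ z, adjoint B₂ z ∈ B₁.kerᗮ → adjoint A₂ z = adjoint D (adjoint B₂ z) := by
  calc _ ↔ ∀ x, (A₂ - B₂ ∘L D) x ∈ (B₁.ker.map (B₂ : F →ₗ[𝕜] H)).topologicalClosure :=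
        forall_congr' (forall_exists_approx_iff_mem_closure B₂ hD)
    _ ↔ _ := by
      rw [forall_mem_closure_iff]
      simp [SetLike.le_def, mem_orthogonal_map_iff_s7, adjoint_comp, sub_eq_zero]

end Hilbert

end ContinuousLinearMap

section MixedFactor

variable {𝕜 E F G H : Type*} [RCLike 𝕜]
  [NormedAddCommGroup E] [InnerProductSpace 𝕜 E] [CompleteSpace E]
  [NormedAddCommGroup F] [InnerProductSpace 𝕜 F] [CompleteSpace F]
  [NormedAddCommGroup G] [InnerProductSpace 𝕜 G] [CompleteSpace G]
  [NormedAddCommGroup H] [InnerProductSpace 𝕜 H] [CompleteSpace H]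
  (A₁ : E →L[𝕜] G) (A₂ : E →L[𝕜] H) (B₁ : F →L[𝕜] G) (B₂ : F →L[𝕜] H)

def IsMixedFactor (D₁ : F →L[𝕜] E) : Prop :=
  D₁ ∘L adjoint B₁ = adjoint A₁ ∧
    ∀ z, adjoint B₂ z ∈ B₁.kerᗮ → adjoint A₂ z = D₁ (adjoint B₂ z)

theorem forall_exists_approx_iff_exists_isMixedFactor :
    (∀ x, ∀ ε : ℝ, 0 < ε → ∃ y : F, A₁ x = B₁ y ∧ ‖A₂ x - B₂ y‖ ≤ ε) ↔
      ∃ D₁, IsMixedFactor A₁ A₂ B₁ B₂ D₁ := by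
  constructor
  · intro h
    obtain ⟨D, hD⟩ := exists_comp_eq_of_range_le_s7 A₁ B₁ <| by
      rintro _ ⟨x, rfl⟩
      obtain ⟨y, hy, -⟩ := h x 1 one_pos
      exact ⟨y, hy.symm⟩
    exact ⟨adjoint D, by rw [← hD, adjoint_comp], (forall_exists_approx_iff_adjoint A₂ B₂ hD).mp h⟩
  · rintro ⟨D₁, hD₁, hD₁B₂⟩
    have hD : B₁ ∘L adjoint D₁ = A₁ := by
      rw [← adjoint_adjoint A₁, ← hD₁, adjoint_comp, adjoint_adjoint]
    exact (forall_exists_approx_iff_adjoint A₂ B₂ hD).mpr (by simpa only [adjoint_adjoint])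

theorem majorization_iff_exists_isMixedFactor :
    ((∃ C : ℝ, 0 < C ∧ ∀ w, ‖adjoint A₁ w‖ ≤ C * ‖adjoint B₁ w‖) ∧
      ∀ (z : H) (y : ℕ → G), Tendsto (fun n => adjoint B₁ (y n)) atTop (𝓝 (adjoint B₂ z)) →
        Tendsto (fun n => adjoint A₁ (y n)) atTop (𝓝 (adjoint A₂ z))) ↔
      ∃ D₁, IsMixedFactor A₁ A₂ B₁ B₂ D₁ := by
  have hcl : (adjoint B₁).range.topologicalClosure = B₁.kerᗮ := (orthogonal_ker B₁).symm
  constructor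
  · rintro ⟨⟨C, -, hC⟩, hseq⟩
    obtain ⟨D₁, hD₁⟩ := exists_comp_eq_of_norm_le _ _ C hC
    exact ⟨D₁, hD₁, fun z hz => (forall_tendsto_iff_of_comp_eq hD₁ _ _).mp (hseq z) (hcl ▸ hz)⟩
  · rintro ⟨D₁, hD₁, hD₁B₂⟩
    refine ⟨⟨‖D₁‖ + 1, by positivity, fun w => ?_⟩, fun z =>
      (forall_tendsto_iff_of_comp_eq hD₁ _ _).mpr fun hz => hD₁B₂ z (hcl ▸ hz)⟩
    rw [← hD₁, comp_apply]
    exact (D₁.le_opNorm _).trans (by gcongr; linarith)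

theorem exists_factorization_iff_exists_isMixedFactor (P : F →L[𝕜] F)
    (hP : P.ker = B₁.kerᗮ) :
    (∃ (D₁ : F →L[𝕜] E) (D₂ : F →ₗ[𝕜] E), (∀ w, adjoint A₁ w = D₁ (adjoint B₁ w)) ∧
        ∀ z, adjoint A₂ z = D₁ (adjoint B₂ z) + D₂ (P (adjoint B₂ z))) ↔
      ∃ D₁, IsMixedFactor A₁ A₂ B₁ B₂ D₁ := by
  refine exists_congr fun D₁ => ?_
  rw [exists_and_left, IsMixedFactor, ContinuousLinearMap.ext_iff]
  refine and_congr (forall_congr' fun _ => eq_comm) ?_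
  refine (LinearMap.exists_eq_add_comp_iff ((P ∘L adjoint B₂ : H →L[𝕜] F) : H →ₗ[𝕜] F)
    (adjoint A₂ : H →ₗ[𝕜] E) (D₁ ∘L adjoint B₂ : H →L[𝕜] E)).trans
    (forall_congr' fun z => imp_congr ?_ Iff.rfl)
  rw [← hP]
  rfl

end MixedFactor

/-- Main theorem: mixed Douglas-type majorization and factorization, full equivalence. -/
theorem mixed_majorization_factorization_tfae
    {H1 H2 H4 H5 : Type*}
    [NormedAddCommGroup H1] [InnerProductSpace ℝ H1] [CompleteSpace H1]
    [NormedAddCommGroup H2] [InnerProductSpace ℝ H2] [CompleteSpace H2]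
    [NormedAddCommGroup H4] [InnerProductSpace ℝ H4] [CompleteSpace H4]
    [NormedAddCommGroup H5] [InnerProductSpace ℝ H5] [CompleteSpace H5]
    (A1 : H1 →L[ℝ] H4) (A2 : H1 →L[ℝ] H5)
    (B1 : H2 →L[ℝ] H4) (B2 : H2 →L[ℝ] H5)
    (P : H2 →L[ℝ] H2)
    (hP : P = (LinearMap.ker (B1 : H2 →ₗ[ℝ] H4)).subtypeL.comp (Submodule.orthogonalProjectionOnto (LinearMap.ker (B1 : H2 →ₗ[ℝ] H4)))) :
    [ -- (i) mixed range inclusion and closure of range inclusion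
      ∀ h1 : H1, ∀ ε : ℝ, 0 < ε →
        ∃ h2 : H2, A1 h1 = B1 h2 ∧ ‖A2 h1 - B2 h2‖ ≤ ε,
      -- (ii) mixed quantitative and non-quantitative majorization
      (∃ C : ℝ, 0 < C ∧ ∀ h4 : H4, ‖adjoint A1 h4‖ ≤ C * ‖adjoint B1 h4‖) ∧
      (∀ (h5 : H5) (y : ℕ → H4),
        Tendsto (fun n => adjoint B1 (y n)) atTop (nhds (adjoint B2 h5)) →
        Tendsto (fun n => adjoint A1 (y n)) atTop (nhds (adjoint A2 h5))),
      -- (iii) mixed continuous and non-continuous factorization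
      ∃ (D1 : H2 →L[ℝ] H1) (D2 : H2 →ₗ[ℝ] H1),
        (∀ h4 : H4, adjoint A1 h4 = D1 (adjoint B1 h4)) ∧
        (∀ h5 : H5, adjoint A2 h5 = D1 (adjoint B2 h5) + D2 (P (adjoint B2 h5)))
    ].TFAE := by
  have hPker : (P : H2 →ₗ[ℝ] H2).ker = B1.kerᗮ := by
    ext x
    simp [hP, Submodule.starProjection_apply_eq_zero_iff]
  have hiii := exists_factorization_iff_exists_isMixedFactor A1 A2 B1 B2 P hPker
  tfae_have 1 ↔ 3 := (forall_exists_approx_iff_exists_isMixedFactor A1 A2 B1 B2).trans hiii.symm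
  tfae_have 2 ↔ 3 := (majorization_iff_exists_isMixedFactor A1 A2 B1 B2).trans hiii.symm
  tfae_finish
end

section
/- (Sufficiency under a preimage condition) Assume that the preimage under B2* of range(B1*) equals the preimage under B2* of the closure of range(B1*), i.e. for every h5 ∈ H5, if B2* h5 lies in the closure of range(B1*) then B2* h5 ∈ range(B1*). If moreover (a) there exists C > 0 with ‖A1* h4‖ ≤ C ‖B1* h4‖ for all h4 ∈ H4, and (b) for all h4 ∈ H4, h5 ∈ H5, B1* h4 + B2* h5 = 0 implies A1* h4 + A2* h5 = 0, then for every h1 ∈ H1 and every ε > 0 there exists h2 ∈ H2 such that A1 h1 = B1 h2 and ‖A2 h1 − B2 h2‖ ≤ ε. -/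
/-!
The first equation is Douglas' range inclusion: the bound `‖A1* h4‖ ≤ C ‖B1* h4‖` makes
`B1* h4 ↦ ⟪A1 h1, h4⟫` a bounded functional on `range B1*`; its Hahn–Banach extension is
represented by some `h2`, and then `B1 h2 = A1 h1`. All other solutions are `h2 + k` with
`k ∈ ker B1`, so it remains to see that `A2 h1 - B2 h2` lies in the closure of `B2 (ker B1)`.
A vector `h5` orthogonal to `B2 (ker B1)` has `B2* h5 ∈ (ker B1)ᗮ = closure (range B1*)`, hence
`B2* h5 = B1* h4` by the preimage condition, hence `A2* h5 = A1* h4` by (b), and these two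
identities make `⟪h5, A2 h1 - B2 h2⟫` vanish.
-/

open ContinuousLinearMap InnerProductSpace

section Factorization

variable {𝕜 E F : Type*} [RCLike 𝕜] [AddCommGroup E] [Module 𝕜 E]
  [NormedAddCommGroup F] [NormedSpace 𝕜 F]

theorem LinearMap.exists_strongDual_comp_eq_of_norm_le_s9 (S : E →ₗ[𝕜] F) (φ : E →ₗ[𝕜] 𝕜)
    (C : ℝ) (h : ∀ x, ‖φ x‖ ≤ C * ‖S x‖) : ∃ g : StrongDual 𝕜 F, ∀ x, g (S x) = φ x := by
  have hker : LinearMap.ker S ≤ LinearMap.ker φ := fun x hx ↦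
    norm_le_zero_iff.mp (by simpa [LinearMap.mem_ker.mp hx] using h x)
  let ψ : LinearMap.range S →ₗ[𝕜] 𝕜 := (LinearMap.ker S).liftQ φ hker ∘ₗ S.quotKerEquivRange.symm
  have hψ : ∀ x, ψ ⟨S x, S.mem_range_self x⟩ = φ x := fun x ↦ by simp [ψ]
  have hbound : ∀ y, ‖ψ y‖ ≤ C * ‖y‖ := by
    rintro ⟨_, x, rfl⟩
    exact (hψ x).symm ▸ h x
  obtain ⟨g, hg, -⟩ := exists_extension_norm_eq _ (ψ.mkContinuous C hbound)
  exact ⟨g, fun x ↦ (hg ⟨S x, S.mem_range_self x⟩).trans (hψ x)⟩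

end Factorization

section Adjoint

variable {𝕜 E F G : Type*} [RCLike 𝕜]
  [NormedAddCommGroup E] [InnerProductSpace 𝕜 E] [CompleteSpace E]
  [NormedAddCommGroup F] [InnerProductSpace 𝕜 F] [CompleteSpace F]
  [NormedAddCommGroup G] [InnerProductSpace 𝕜 G] [CompleteSpace G]

local notation "⟪" x ", " y "⟫" => inner 𝕜 x y

theorem ContinuousLinearMap.range_le_range_of_norm_adjoint_le (A : E →L[𝕜] G) (B : F →L[𝕜] G)
    (C : ℝ) (h : ∀ y, ‖adjoint A y‖ ≤ C * ‖adjoint B y‖) : A.range ≤ B.range := by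
  rintro _ ⟨x, rfl⟩
  obtain ⟨g, hg⟩ := (adjoint B).toLinearMap.exists_strongDual_comp_eq_of_norm_le_s9
    (innerₛₗ 𝕜 (A x)) (‖x‖ * C) fun y ↦ by
      calc ‖⟪A x, y⟫‖ = ‖⟪x, adjoint A y⟫‖ := by rw [adjoint_inner_right]
        _ ≤ ‖x‖ * ‖adjoint A y‖ := norm_inner_le_norm _ _
        _ ≤ ‖x‖ * (C * ‖adjoint B y‖) := by gcongr; exact h y
        _ = ‖x‖ * C * ‖adjoint B y‖ := by ring
  refine ⟨(toDual 𝕜 F).symm g, ext_inner_right 𝕜 fun y ↦ ?_⟩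
  rw [coe_coe, ← adjoint_inner_right, toDual_symm_apply]
  exact hg y

theorem ContinuousLinearMap.orthogonal_map (T : E →L[𝕜] F) (K : Submodule 𝕜 E) :
    (K.map (T : E →ₗ[𝕜] F))ᗮ = Kᗮ.comap (adjoint T : F →ₗ[𝕜] E) := by
  ext y
  simp [Submodule.mem_orthogonal, adjoint_inner_right]

theorem sub_mem_topologicalClosure_map_ker_of_preimage_closure
    {H : Type*} [NormedAddCommGroup H] [InnerProductSpace 𝕜 H] [CompleteSpace H]
    {A1 : E →L[𝕜] G} {A2 : E →L[𝕜] H} {B1 : F →L[𝕜] G} {B2 : F →L[𝕜] H}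
    (hpre : ∀ h5, adjoint B2 h5 ∈ closure (Set.range (adjoint B1)) →
      adjoint B2 h5 ∈ Set.range (adjoint B1))
    (hb : ∀ h4 h5, adjoint B1 h4 + adjoint B2 h5 = 0 → adjoint A1 h4 + adjoint A2 h5 = 0)
    {h1 : E} {h2 : F} (h : B1 h2 = A1 h1) :
    A2 h1 - B2 h2 ∈ (B1.ker.map (B2 : F →ₗ[𝕜] H)).topologicalClosure := by
  rw [← Submodule.orthogonal_orthogonal_eq_closure, Submodule.mem_orthogonal]
  intro h5 hh5
  rw [orthogonal_map, Submodule.mem_comap, orthogonal_ker, ← SetLike.mem_coe, Submodule.topologicalClosure_coe, LinearMap.coe_range, coe_coe] at hh5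
  obtain ⟨h4, hh4⟩ := hpre h5 hh5
  have hA : adjoint A2 h5 = adjoint A1 h4 := by
    have := hb (-h4) h5 (by rw [map_neg, hh4, neg_add_cancel])
    rwa [map_neg, neg_add_eq_zero, eq_comm] at this
  calc ⟪h5, A2 h1 - B2 h2⟫ = ⟪adjoint A2 h5, h1⟫ - ⟪adjoint B2 h5, h2⟫ := by
        rw [inner_sub_right, adjoint_inner_left, adjoint_inner_left]
    _ = ⟪h4, A1 h1 - B1 h2⟫ := by
        rw [hA, ← hh4, adjoint_inner_left, adjoint_inner_left, inner_sub_right]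
    _ = 0 := by rw [h, sub_self, inner_zero_right]

end Adjoint

/-- Sufficiency of the necessary conditions under the preimage condition
`(B2*)⁻¹(R(B1*)) = (B2*)⁻¹(closure R(B1*))`. -/
theorem sufficiency_under_preimage_condition
    {H1 H2 H4 H5 : Type*}
    [NormedAddCommGroup H1] [InnerProductSpace ℝ H1] [CompleteSpace H1]
    [NormedAddCommGroup H2] [InnerProductSpace ℝ H2] [CompleteSpace H2]
    [NormedAddCommGroup H4] [InnerProductSpace ℝ H4] [CompleteSpace H4]
    [NormedAddCommGroup H5] [InnerProductSpace ℝ H5] [CompleteSpace H5]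
    (A1 : H1 →L[ℝ] H4) (A2 : H1 →L[ℝ] H5)
    (B1 : H2 →L[ℝ] H4) (B2 : H2 →L[ℝ] H5)
    (hpre : ∀ h5 : H5, adjoint B2 h5 ∈ closure (Set.range (adjoint B1)) →
      adjoint B2 h5 ∈ Set.range (adjoint B1))
    (ha : ∃ C : ℝ, 0 < C ∧ ∀ h4 : H4, ‖adjoint A1 h4‖ ≤ C * ‖adjoint B1 h4‖)
    (hb : ∀ (h4 : H4) (h5 : H5), adjoint B1 h4 + adjoint B2 h5 = 0 →
      adjoint A1 h4 + adjoint A2 h5 = 0) :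
    ∀ h1 : H1, ∀ ε : ℝ, 0 < ε →
      ∃ h2 : H2, A1 h1 = B1 h2 ∧ ‖A2 h1 - B2 h2‖ ≤ ε := by
  obtain ⟨C, -, hC⟩ := ha
  intro h1 ε hε
  obtain ⟨h2, hB : B1 h2 = A1 h1⟩ := range_le_range_of_norm_adjoint_le A1 B1 C hC ⟨h1, rfl⟩
  obtain ⟨_, ⟨k, hk : B1 k = 0, rfl⟩, hdist⟩ := Metric.mem_closure_iff.mp
    (sub_mem_topologicalClosure_map_ker_of_preimage_closure hpre hb hB) ε hε
  refine ⟨h2 + k, ?_, ?_⟩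
  · rw [map_add, hk, add_zero, hB]
  · rw [map_add, ← sub_sub, ← dist_eq_norm]
    exact hdist.le
end

section
/- (Closed range corollary) Assume that range(B1*) is a closed subspace of H2. If (a) there exists C > 0 with ‖A1* h4‖ ≤ C ‖B1* h4‖ for all h4 ∈ H4, and (b) for all h4 ∈ H4, h5 ∈ H5, B1* h4 + B2* h5 = 0 implies A1* h4 + A2* h5 = 0, then for every h1 ∈ H1 and every ε > 0 there exists h2 ∈ H2 such that A1 h1 = B1 h2 and ‖A2 h1 − B2 h2‖ ≤ ε. -/
/-!
By (a), `B₁* y ↦ A₁* y` is a well-defined bounded map on the closed subspace `range B₁*`;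
precomposed with the orthogonal projection onto it, it gives `D` with `A₁* = D B₁*`, hence
`A₁ = B₁ D*` and `A₁ h₁ = B₁ h₂` is solvable. The solutions form `h₂ + ker B₁`, so it remains to
see that `A₂ h₁ - B₂ h₂` lies in the closure of `B₂ (ker B₁)`. If `z ⊥ B₂ (ker B₁)`, then
`B₂* z ∈ (ker B₁)ᗮ = range B₁*`, say `B₂* z = B₁* y`; (b) turns this into `A₂* z = A₁* y`, and
then `⟪z, A₂ h₁ - B₂ h₂⟫ = ⟪y, A₁ h₁ - B₁ h₂⟫ = 0`.
-/

open ContinuousLinearMap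
open scoped InnerProductSpace

namespace ContinuousLinearMap

variable {𝕜 E F G H : Type*} [RCLike 𝕜]

theorem exists_eq_comp_of_norm_le_of_isClosed_range
    [NormedAddCommGroup E] [NormedSpace 𝕜 E]
    [NormedAddCommGroup F] [InnerProductSpace 𝕜 F] [CompleteSpace F]
    [NormedAddCommGroup G] [NormedSpace 𝕜 G]
    (S : E →L[𝕜] F) (T : E →L[𝕜] G) (hS : IsClosed (Set.range S)) (C : ℝ)
    (hTS : ∀ x, ‖T x‖ ≤ C * ‖S x‖) : ∃ D : F →L[𝕜] G, T = D ∘L S := by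
  have hker : LinearMap.ker S.toLinearMap ≤ LinearMap.ker T.toLinearMap := fun x hx =>
    norm_le_zero_iff.mp <| by simpa [show S x = 0 from hx] using hTS x
  let K := LinearMap.range S.toLinearMap
  have : CompleteSpace K := hS.completeSpace_coe
  let D₀ : K →ₗ[𝕜] G :=
    (LinearMap.ker S.toLinearMap).liftQ T.toLinearMap hker ∘ₗ S.toLinearMap.quotKerEquivRange.symm
  have hD₀ : ∀ x, D₀ ⟨S x, LinearMap.mem_range_self _ x⟩ = T x := fun x =>
    congrArg ((LinearMap.ker S.toLinearMap).liftQ T.toLinearMap hker)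
      (S.toLinearMap.quotKerEquivRange_symm_apply_image x _)
  have hbound : ∀ k, ‖D₀ k‖ ≤ C * ‖k‖ := by
    rintro ⟨_, x, rfl⟩
    simpa [hD₀] using hTS x
  refine ⟨D₀.mkContinuous C hbound ∘L K.orthogonalProjectionOnto, ?_⟩
  ext x
  have hx := K.orthogonalProjectionOnto_mem_subspace_eq_self ⟨S x, LinearMap.mem_range_self _ x⟩
  simp [hx, hD₀]

variable [NormedAddCommGroup E] [InnerProductSpace 𝕜 E] [CompleteSpace E]
  [NormedAddCommGroup F] [InnerProductSpace 𝕜 F] [CompleteSpace F]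
  [NormedAddCommGroup G] [InnerProductSpace 𝕜 G] [CompleteSpace G]
  [NormedAddCommGroup H] [InnerProductSpace 𝕜 H] [CompleteSpace H]

theorem range_le_range_of_norm_adjoint_le_s10 (A : E →L[𝕜] F) (B : G →L[𝕜] F)
    (hB : IsClosed (Set.range (adjoint B))) (C : ℝ)
    (hAB : ∀ y, ‖adjoint A y‖ ≤ C * ‖adjoint B y‖) : A.range ≤ B.range := by
  obtain ⟨D, hD⟩ := exists_eq_comp_of_norm_le_of_isClosed_range _ _ hB C hAB
  have hA : A = B ∘L adjoint D := by
    simpa only [adjoint_adjoint, adjoint_comp] using congrArg adjoint hD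
  rw [hA]
  exact LinearMap.range_comp_le_range (adjoint D).toLinearMap B.toLinearMap

theorem orthogonal_ker_eq_range_adjoint (B : E →L[𝕜] F)
    (hB : IsClosed (Set.range (adjoint B))) : B.kerᗮ = (adjoint B).range := by
  rw [← adjoint_adjoint B, ← orthogonal_range, Submodule.orthogonal_orthogonal_eq_closure,
    adjoint_adjoint]
  exact hB.submodule_topologicalClosure_eq

theorem sub_mem_topologicalClosure_map_ker
    (A₁ : E →L[𝕜] F) (A₂ : E →L[𝕜] H) (B₁ : G →L[𝕜] F) (B₂ : G →L[𝕜] H)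
    (hB₁ : IsClosed (Set.range (adjoint B₁)))
    (hAB : ∀ y z, adjoint B₁ y + adjoint B₂ z = 0 → adjoint A₁ y + adjoint A₂ z = 0)
    {x : E} {u : G} (hxu : A₁ x = B₁ u) :
    A₂ x - B₂ u ∈ (B₁.ker.map B₂.toLinearMap).topologicalClosure := by
  rw [← Submodule.orthogonal_orthogonal_eq_closure]
  intro z hz
  have hz' : adjoint B₂ z ∈ B₁.kerᗮ := fun w hw => by
    rw [adjoint_inner_right]
    exact hz _ ⟨w, hw, rfl⟩
  obtain ⟨y, hy : adjoint B₁ y = adjoint B₂ z⟩ := orthogonal_ker_eq_range_adjoint B₁ hB₁ ▸ hz'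
  have hA : adjoint A₂ z = adjoint A₁ y := by
    have := hAB (-y) z (by rw [map_neg, hy, neg_add_cancel])
    rwa [map_neg, neg_add_eq_zero, eq_comm] at this
  calc ⟪z, A₂ x - B₂ u⟫_𝕜 = ⟪adjoint A₂ z, x⟫_𝕜 - ⟪adjoint B₂ z, u⟫_𝕜 := by
        rw [inner_sub_right, adjoint_inner_left, adjoint_inner_left]
    _ = ⟪y, A₁ x - B₁ u⟫_𝕜 := by
        rw [hA, ← hy, adjoint_inner_left, adjoint_inner_left, inner_sub_right]
    _ = 0 := by rw [hxu, sub_self, inner_zero_right]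

end ContinuousLinearMap

/-- Closed range corollary: if `R(B1*)` is closed, the necessary conditions
are sufficient for the mixed goal. -/
theorem sufficiency_under_closed_range
    {H1 H2 H4 H5 : Type*}
    [NormedAddCommGroup H1] [InnerProductSpace ℝ H1] [CompleteSpace H1]
    [NormedAddCommGroup H2] [InnerProductSpace ℝ H2] [CompleteSpace H2]
    [NormedAddCommGroup H4] [InnerProductSpace ℝ H4] [CompleteSpace H4]
    [NormedAddCommGroup H5] [InnerProductSpace ℝ H5] [CompleteSpace H5]
    (A1 : H1 →L[ℝ] H4) (A2 : H1 →L[ℝ] H5)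
    (B1 : H2 →L[ℝ] H4) (B2 : H2 →L[ℝ] H5)
    (hclosed : IsClosed (Set.range (adjoint B1)))
    (ha : ∃ C : ℝ, 0 < C ∧ ∀ h4 : H4, ‖adjoint A1 h4‖ ≤ C * ‖adjoint B1 h4‖)
    (hb : ∀ (h4 : H4) (h5 : H5), adjoint B1 h4 + adjoint B2 h5 = 0 →
      adjoint A1 h4 + adjoint A2 h5 = 0) :
    ∀ h1 : H1, ∀ ε : ℝ, 0 < ε →
      ∃ h2 : H2, A1 h1 = B1 h2 ∧ ‖A2 h1 - B2 h2‖ ≤ ε := by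
  intro h1 ε hε
  obtain ⟨C, -, hC⟩ := ha
  obtain ⟨h2, hh2 : B1 h2 = A1 h1⟩ :=
    range_le_range_of_norm_adjoint_le_s10 A1 B1 hclosed C hC ⟨h1, rfl⟩
  obtain ⟨_, ⟨k, hk : B1 k = 0, rfl⟩, hdist : dist (A2 h1 - B2 h2) (B2 k) < ε⟩ :=
    Metric.mem_closure_iff.mp
      (sub_mem_topologicalClosure_map_ker A1 A2 B1 B2 hclosed hb hh2.symm) ε hε
  refine ⟨h2 + k, by rw [map_add, hk, add_zero, hh2], ?_⟩
  rw [map_add, ← sub_sub, ← dist_eq_norm]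
  exact hdist.le
end

section
/- Let H = ℓ²(ℕ, ℝ) with standard Hilbert basis (e_n). Let x ∈ H be the element with coordinates x(n) = 1/(n+1). Let B1 : H → H be the continuous linear map given coordinatewise by (B1 f)(n) = f(n)/(n+1)², and let B2 : H → H be given by B2 h = ⟨h, x⟩ · x. Then for every h ∈ H, if B2 h belongs to range(B1) then ⟨h, x⟩ = 0. -/
/-!
If `B1 f = c • x`, then comparing coordinates gives `f n = c (n + 1)`. The coordinates of an
`ℓ²` vector are bounded by its norm, so `|c| ≤ ‖f‖ / (n + 1)` for every `n`, forcing `c = 0`.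
-/

open Filter Topology

theorem lp.eq_zero_of_forall_apply_eq_succ_smul {E : Type*} [NormedAddCommGroup E]
    [NormedSpace ℝ E] {p : ENNReal} (hp : p ≠ 0) (f : lp (fun _ : ℕ => E) p) {v : E}
    (hf : ∀ n : ℕ, f n = ((n : ℝ) + 1) • v) : v = 0 := by
  have hbound : ∀ n : ℕ, ‖v‖ ≤ ‖f‖ / ((n : ℝ) + 1) := fun n => by
    rw [le_div_iff₀ (by positivity), mul_comm, ← abs_of_pos (by positivity : (0 : ℝ) < n + 1),
      ← Real.norm_eq_abs, ← norm_smul, ← hf]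
    exact lp.norm_apply_le_norm hp f n
  have hlim : Tendsto (fun n : ℕ => ‖f‖ / ((n : ℝ) + 1)) atTop (𝓝 0) :=
    tendsto_const_div_atTop_nhds_zero_nat ‖f‖ |>.comp (tendsto_add_atTop_nat 1) |>.congr
      fun n => by simp
  exact norm_le_zero_iff.mp (ge_of_tendsto' hlim hbound)

/-- In `H = ℓ²(ℕ, ℝ)`, with `x(n) = 1/(n+1)`, the diagonal operator
`(B1 f)(n) = f(n)/(n+1)²` and the rank-one operator `B2 h = ⟨h, x⟩ • x`:
if `B2 h` belongs to the range of `B1`, then `⟨h, x⟩ = 0`. -/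
theorem rank_one_preimage_of_diagonal_range
    (x : lp (fun _ : ℕ => ℝ) 2)
    (hx : ∀ n : ℕ, x n = 1 / ((n : ℝ) + 1))
    (B1 : lp (fun _ : ℕ => ℝ) 2 →L[ℝ] lp (fun _ : ℕ => ℝ) 2)
    (hB1 : ∀ (f : lp (fun _ : ℕ => ℝ) 2) (n : ℕ), B1 f n = f n / ((n : ℝ) + 1) ^ 2)
    (B2 : lp (fun _ : ℕ => ℝ) 2 →L[ℝ] lp (fun _ : ℕ => ℝ) 2)
    (hB2 : ∀ h : lp (fun _ : ℕ => ℝ) 2, B2 h = (inner ℝ h x : ℝ) • x) :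
    ∀ h : lp (fun _ : ℕ => ℝ) 2, B2 h ∈ Set.range B1 → (inner ℝ h x : ℝ) = 0 := by
  rintro h ⟨f, hf⟩
  refine lp.eq_zero_of_forall_apply_eq_succ_smul two_ne_zero f fun n => ?_
  have hcoord : f n / ((n : ℝ) + 1) ^ 2 = inner ℝ h x * (1 / ((n : ℝ) + 1)) := by
    rw [← hB1, hf, hB2, lp.coeFn_smul, Pi.smul_apply, hx, smul_eq_mul]
  field_simp at hcoord
  rw [smul_eq_mul, hcoord]
end

section
/- (Counterexample: the necessary conditions are not sufficient) Let H = ℓ²(ℕ, ℝ), let x ∈ H have coordinates x(n) = 1/(n+1), let B1 : H → H be given by (B1 f)(n) = f(n)/(n+1)², let B2 : H → H be given by B2 h = ⟨h, x⟩ · x, let A1 = 0 : H → H, and let A2 : H → H be the orthogonal projection onto the one-dimensional span of x. Then: (a) ‖A1 h‖ ≤ ‖B1 h‖ for all h ∈ H; (b) for all h4, h5 ∈ H, if B1 h4 + B2 h5 = 0 then A1 h4 + A2 h5 = 0 (note B1, B2, A1, A2 are self-adjoint); but (c) it is NOT the case that for every h1 ∈ H and every ε > 0 there exists h2 ∈ H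 with A1 h1 = B1 h2 and ‖A2 h1 − B2 h2‖ ≤ ε; indeed, taking h1 = x and ε = ‖x‖/2, there is no h2 ∈ H with B1 h2 = 0 and ‖A2 x − B2 h2‖ ≤ ‖x‖/2. -/
/-!
`A2` is the orthogonal projection onto `ℝ x` and `B1` is injective, so the exact constraint
`A1 x = B1 h2` forces `h2 = 0`, and then `‖A2 x - B2 h2‖ = ‖x‖ > ‖x‖ / 2`. For the kernel
condition, reading `B1 h4 + ⟪h5, x⟫ x = 0` coordinatewise gives `h4 n = -⟪h5, x⟫ (n + 1)`;
an `ℓ²` sequence is bounded, so `⟪h5, x⟫ = 0`, i.e. `h5 ⊥ x` and `A2 h5 = 0`.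
-/

open scoped ENNReal

theorem eq_zero_of_forall_abs_mul_natCast_succ_le {R : Type*} [Field R] [LinearOrder R]
    [IsStrictOrderedRing R] [Archimedean R] {t C : R} (h : ∀ n : ℕ, |t| * (n + 1) ≤ C) :
    t = 0 := by
  by_contra ht
  obtain ⟨n, hn⟩ := exists_nat_gt (C / |t|)
  rw [div_lt_iff₀ (abs_pos.mpr ht)] at hn
  nlinarith [h n, abs_nonneg t]

theorem lp.eq_zero_of_forall_apply_eq_mul_natCast_succ {p : ℝ≥0∞} (hp : p ≠ 0)
    (f : lp (fun _ : ℕ => ℝ) p) {t : ℝ} (hf : ∀ n : ℕ, f n = t * (n + 1)) : t = 0 := by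
  refine eq_zero_of_forall_abs_mul_natCast_succ_le (C := ‖f‖) fun n => ?_
  calc |t| * (n + 1) = ‖f n‖ := by
        rw [hf, Real.norm_eq_abs, abs_mul, abs_of_pos (Nat.cast_add_one_pos (α := ℝ) n)]
    _ ≤ ‖f‖ := lp.norm_apply_le_norm hp f n

/-- Counterexample: the necessary conditions of the mixed goal are not sufficient.
In `H = ℓ²(ℕ, ℝ)`, with `x(n) = 1/(n+1)`, `(B1 f)(n) = f(n)/(n+1)²`,
`B2 h = ⟨h, x⟩ • x`, `A1 = 0` and `A2` the orthogonal projection onto `ℝ·x`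
(all self-adjoint), the majorization and kernel conditions hold, but the mixed
exact/approximate goal fails (witnessed by `h1 = x` and `ε = ‖x‖/2`). -/
theorem necessary_conditions_not_sufficient_counterexample
    (x : lp (fun _ : ℕ => ℝ) 2)
    (hx : ∀ n : ℕ, x n = 1 / ((n : ℝ) + 1))
    (B1 : lp (fun _ : ℕ => ℝ) 2 →L[ℝ] lp (fun _ : ℕ => ℝ) 2)
    (hB1 : ∀ (f : lp (fun _ : ℕ => ℝ) 2) (n : ℕ), B1 f n = f n / ((n : ℝ) + 1) ^ 2)
    (B2 : lp (fun _ : ℕ => ℝ) 2 →L[ℝ] lp (fun _ : ℕ => ℝ) 2)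
    (hB2 : ∀ h : lp (fun _ : ℕ => ℝ) 2, B2 h = (inner ℝ h x : ℝ) • x)
    (A1 : lp (fun _ : ℕ => ℝ) 2 →L[ℝ] lp (fun _ : ℕ => ℝ) 2)
    (hA1 : A1 = 0)
    (A2 : lp (fun _ : ℕ => ℝ) 2 →L[ℝ] lp (fun _ : ℕ => ℝ) 2)
    (hA2 : ∀ h : lp (fun _ : ℕ => ℝ) 2,
      A2 h ∈ Submodule.span ℝ {x} ∧ h - A2 h ∈ (Submodule.span ℝ {x})ᗮ) :
    (∀ h : lp (fun _ : ℕ => ℝ) 2, ‖A1 h‖ ≤ ‖B1 h‖) ∧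
    (∀ h4 h5 : lp (fun _ : ℕ => ℝ) 2, B1 h4 + B2 h5 = 0 → A1 h4 + A2 h5 = 0) ∧
    ¬ (∀ h1 : lp (fun _ : ℕ => ℝ) 2, ∀ ε : ℝ, 0 < ε →
      ∃ h2 : lp (fun _ : ℕ => ℝ) 2, A1 h1 = B1 h2 ∧ ‖A2 h1 - B2 h2‖ ≤ ε) ∧
    ¬ (∃ h2 : lp (fun _ : ℕ => ℝ) 2, B1 h2 = 0 ∧ ‖A2 x - B2 h2‖ ≤ ‖x‖ / 2) := by
  have hA2_eq (h) : A2 h = (ℝ ∙ x).starProjection h :=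
    ((ℝ ∙ x).eq_starProjection_of_mem_orthogonal (hA2 h).1 (hA2 h).2).symm
  have hx_pos : 0 < ‖x‖ :=
    norm_pos_iff.mpr fun h0 => by simpa [h0] using hx 0
  have hB1_inj (h) (hh : B1 h = 0) : h = 0 := by
    ext n
    simpa [hB1, Nat.cast_add_one_ne_zero] using congrArg (· n) hh
  have no_exact : ¬ ∃ h2, B1 h2 = 0 ∧ ‖A2 x - B2 h2‖ ≤ ‖x‖ / 2 := by
    rintro ⟨h2, hh2, hle⟩
    rw [hB1_inj h2 hh2, map_zero, sub_zero, hA2_eq,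
      Submodule.starProjection_eq_self_iff.mpr (Submodule.mem_span_singleton_self x)] at hle
    linarith
  refine ⟨fun h => by simp [hA1], fun h4 h5 heq => ?_, fun hall => ?_, no_exact⟩
  · have hinner : inner ℝ h5 x = 0 := by
      refine neg_eq_zero.mp (lp.eq_zero_of_forall_apply_eq_mul_natCast_succ two_ne_zero h4
        fun n => ?_)
      have hn := congrArg (· n) heq
      simp only [lp.coeFn_add, lp.coeFn_smul, lp.coeFn_zero, Pi.add_apply, Pi.smul_apply,
        Pi.zero_apply, hB1, hB2, hx, smul_eq_mul] at hn
      field_simp at hn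
      linear_combination hn
    rw [hA1, zero_apply, zero_add, hA2_eq,
      Submodule.starProjection_apply_eq_zero_iff, Submodule.mem_orthogonal_singleton_iff_inner_right,
      real_inner_comm, hinner]
  · obtain ⟨h2, hA1x, hle⟩ := hall x (‖x‖ / 2) (by positivity)
    exact no_exact ⟨h2, by simpa [hA1] using hA1x.symm, hle⟩
end
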